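/- arXiv:1907.10691 — 5 statements merged into one kernel-verified Lean document; each statement's English description precedes it below -/
import Mathlib

section
/- In the Hopf algebra A = ℤ[β][x] with coproduct Δ(xⁿ) = Σ_{i+j=n} xⁱ ⊗ xʲ and the twisted product ∇_β determined by S(x) = -x being the antipode, the antipode satisfies S(xⁿ) = (-1)ⁿ · x·(x+β)^{n-1} for all n > 0. -/
noncomputable section

/-- The ring `A = ℤ[β][x]`, with `β` the inner variable and `x` the outer variable. -/
abbrev A6 : Type := Polynomial (Polynomial ℤ)

/-- The element `β` of `A = ℤ[β][x]`. -/
def β6 : A6 := Polynomial.C Polynomial.X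

open scoped Classical in
/-- The twisted product `∇_β` on `A = ℤ[β][x]`, the bilinear map dual to the coproduct
`Δ_β(x) = x⊗1 + 1⊗x + βx⊗x` on `ℤ[β]⟦x⟧`.  On monomials it is given by
`∇_β(xⁱ ⊗ xʲ) = Σ_{max(i,j) ≤ n ≤ i+j} C(n, n-j)·C(j, n-i)·β^{i+j-n}·xⁿ`
(the coefficient being the trinomial coefficient `n!/((n-j)!(n-i)!(i+j-n)!)`),
extended bilinearly. -/
def nablaB (p q : A6) : A6 :=
  p.sum fun i a =>
    q.sum fun j b =>
      ∑ n ∈ Finset.Icc (max i j) (i + j),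
        Polynomial.C (a * b) * ((n.choose (n - j) * j.choose (n - i) : ℕ) : A6) *
          β6 ^ (i + j - n) * Polynomial.X ^ n

/-- The claimed antipode values: `S(x⁰) = 1` and `S(xⁿ) = (-1)ⁿ·x·(x+β)^{n-1}` for `n > 0`. -/
def Santi : ℕ → A6
  | 0 => 1
  | n + 1 => (-1) ^ (n + 1) * (Polynomial.X * (Polynomial.X + β6) ^ n)

/-!
Pair `A` with `ℤ[β]⟦x⟧` by `⟨xⁿ, f⟩ = coeff n f`. Since `(1 + βx)^m` is grouplike for `Δ_β`,
pairing with it, `p ↦ Σ aₙ C(m,n) βⁿ`, is multiplicative for `∇_β` (concretely, this is the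
identity `C(m,i) C(m,j) = Σₙ C(m,n) C(n,n-j) C(j,n-i)`), and these characters for `m ∈ ℕ`
separate the elements of `A`. The character sends `S(xᵏ)` to `C(-m,k) βᵏ`, the coefficient of
`xᵏ` in `(1 + βx)^{-m}`, so it sends the convolution sum to
`βⁿ Σ_{i+j=n} C(-m,i) C(m,j) = βⁿ C(0,n) = 0` by Chu–Vandermonde.
-/

open Polynomial Finset

theorem Nat.sum_Icc_choose_mul_choose (a i j : ℕ) :
    ∑ n ∈ Icc (max i j) (i + j), a.choose (n - j) * j.choose (n - i) = (a + j).choose i := by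
  have hsymm : ∀ n ∈ Icc (max i j) (i + j),
      a.choose (n - j) * j.choose (n - i) = a.choose (n - j) * j.choose (i + j - n) := by
    intro n hn
    rw [mem_Icc] at hn
    rw [Nat.choose_symm_of_eq_add (n := j) (a := n - i) (b := i + j - n) (by omega)]
  have hvanish : ∀ n ∈ Icc j (i + j), n ∉ Icc (max i j) (i + j) →
      a.choose (n - j) * j.choose (i + j - n) = 0 := by
    intro n hn hn'
    simp only [mem_Icc] at hn hn'
    rw [Nat.choose_eq_zero_of_lt (n := j) (by omega), mul_zero]
  rw [sum_congr rfl hsymm,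
    sum_subset (fun n hn => by simp only [mem_Icc] at hn ⊢; omega) hvanish,
    Nat.add_choose_eq]
  refine sum_nbij' (fun n => (n - j, i + j - n)) (fun d => d.1 + j) ?_ ?_ ?_ ?_
    (fun _ _ => rfl) <;>
    simp only [mem_Icc, HasAntidiagonal.mem_antidiagonal, Prod.forall, Prod.mk.injEq] <;>
    intros <;> omega

theorem Nat.choose_mul_choose_eq_sum_Icc (m i j : ℕ) :
    m.choose i * m.choose j =
      ∑ n ∈ Icc (max i j) (i + j), m.choose n * (n.choose (n - j) * j.choose (n - i)) := by
  have hterm : ∀ n ∈ Icc (max i j) (i + j), m.choose n * (n.choose (n - j) * j.choose (n - i)) =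
      m.choose j * ((m - j).choose (n - j) * j.choose (n - i)) := by
    intro n hn
    rw [mem_Icc] at hn
    rw [← mul_assoc, ← mul_assoc, Nat.choose_symm (by omega), Nat.choose_mul (by omega)]
  rw [sum_congr rfl hterm, ← mul_sum, Nat.sum_Icc_choose_mul_choose, mul_comm]
  rcases le_or_gt j m with hjm | hmj
  · rw [Nat.sub_add_cancel hjm]
  · simp [Nat.choose_eq_zero_of_lt hmj]

theorem Nat.sum_range_choose_mul_choose_succ (m k : ℕ) :
    ∑ r ∈ range (k + 1), k.choose r * m.choose (r + 1) = (m + k).choose (k + 1) := by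
  rw [Nat.add_choose_eq m k (k + 1), Finset.Nat.sum_antidiagonal_eq_sum_range_succ_mk,
    sum_range_succ' _ (k + 1)]
  simp only [Nat.sub_zero, Nat.choose_succ_self, mul_zero, add_zero]
  refine sum_congr rfl fun r hr => ?_
  rw [mem_range] at hr
  rw [mul_comm, Nat.choose_symm_of_eq_add (n := k) (a := r) (b := k + 1 - (r + 1)) (by omega)]

theorem Ring.choose_neg_natCast_succ (m k : ℕ) :
    Ring.choose (-(m : ℤ)) (k + 1) = (-1) ^ (k + 1) * ((m + k).choose (k + 1) : ℤ) := by
  rw [Ring.choose_neg, Units.smul_def, Int.coe_negOnePow_natCast, smul_eq_mul,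
    show (m : ℤ) + (k + 1 : ℕ) - 1 = (m + k : ℕ) by push_cast; ring, Ring.choose_natCast]

section binomialEval

variable {R : Type*} [CommRing R]

/-- The pairing of `p = Σ aₙ xⁿ` with the power series `(1 + b x)^m`, i.e. `Σ aₙ C(m,n) bⁿ`. -/
def binomialEval (b : R) (m : ℕ) : R[X] →ₗ[R] R :=
  lsum fun n => LinearMap.mulRight R ((m.choose n : R) * b ^ n)

theorem binomialEval_apply (b : R) (m : ℕ) (p : R[X]) :
    binomialEval b m p = p.sum fun n a => a * ((m.choose n : R) * b ^ n) := rfl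

theorem binomialEval_C_mul_X_pow (b : R) (m n : ℕ) (a : R) :
    binomialEval b m (C a * X ^ n) = a * ((m.choose n : R) * b ^ n) := by
  rw [binomialEval_apply, C_mul_X_pow_eq_monomial, sum_monomial_index _ _ (by simp)]

theorem binomialEval_X_pow (b : R) (m n : ℕ) :
    binomialEval b m (X ^ n) = (m.choose n : R) * b ^ n := by
  simpa using binomialEval_C_mul_X_pow b m n 1

theorem eq_zero_of_forall_binomialEval_eq_zero {b : R} (hb : IsRegular b) {p : R[X]}
    (h : ∀ m, binomialEval b m p = 0) : p = 0 := by
  ext k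
  induction k using Nat.strong_induction_on with
  | _ k ih =>
    have hk : binomialEval b k p = p.coeff k * b ^ k := by
      rw [binomialEval_apply, sum_def, sum_eq_single k]
      · simp
      · intro n _ hnk
        rcases lt_or_gt_of_ne hnk with hlt | hgt
        · simp [ih n hlt]
        · simp [Nat.choose_eq_zero_of_lt hgt]
      · intro hk
        simp [notMem_support_iff.mp hk]
    rw [coeff_zero]
    exact (hb.pow k).right (by simpa [hk] using h k)

theorem binomialEval_C_mul (b : R) (m : ℕ) (c : R) (p : R[X]) :
    binomialEval b m (C c * p) = c * binomialEval b m p := by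
  rw [← smul_eq_C_mul, map_smul, smul_eq_mul]

theorem binomialEval_C_mul_C_pow_mul_X_pow (b c : R) (m k n : ℕ) :
    binomialEval b m (C c * C b ^ k * X ^ n) = c * ((m.choose n : R) * b ^ (k + n)) := by
  rw [← C_pow, ← C_mul, binomialEval_C_mul_X_pow, pow_add]
  ring

end binomialEval

theorem binomialEval_nablaB (m : ℕ) (p q : A6) :
    binomialEval X m (nablaB p q) = binomialEval X m p * binomialEval X m q := by
  simp only [nablaB, binomialEval_apply X m p, binomialEval_apply X m q, sum_def, map_sum,
    sum_mul_sum]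
  refine sum_congr rfl fun i _ => sum_congr rfl fun j _ => ?_
  have hterm : ∀ n ∈ Icc (max i j) (i + j),
      binomialEval X m (C (p.coeff i * q.coeff j) *
          ((n.choose (n - j) * j.choose (n - i) : ℕ) : A6) * β6 ^ (i + j - n) * X ^ n) =
        p.coeff i * q.coeff j *
          (((m.choose n * (n.choose (n - j) * j.choose (n - i)) : ℕ) : ℤ[X]) * X ^ (i + j)) := by
    intro n hn
    rw [mem_Icc] at hn
    rw [β6, ← map_natCast C, ← C_mul, binomialEval_C_mul_C_pow_mul_X_pow,
      Nat.sub_add_cancel hn.2]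
    push_cast
    ring
  rw [sum_congr rfl hterm, ← mul_sum, ← sum_mul, ← Nat.cast_sum,
    ← Nat.choose_mul_choose_eq_sum_Icc]
  push_cast
  ring

theorem X_mul_X_add_β6_pow (k : ℕ) :
    (X * (X + β6) ^ k : A6) =
      ∑ r ∈ range (k + 1), C (k.choose r : ℤ[X]) * β6 ^ (k - r) * X ^ (r + 1) := by
  rw [add_pow, mul_sum]
  refine sum_congr rfl fun r _ => ?_
  rw [map_natCast]
  ring

theorem binomialEval_Santi (m k : ℕ) :
    binomialEval X m (Santi k) = ((Ring.choose (-(m : ℤ)) k : ℤ) : ℤ[X]) * X ^ k := by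
  cases k with
  | zero => simpa [Santi, Ring.choose_zero_right] using binomialEval_X_pow (X : ℤ[X]) m 0
  | succ k =>
    have hsum : binomialEval X m (X * (X + β6) ^ k) =
        ((m + k).choose (k + 1) : ℤ[X]) * X ^ (k + 1) := by
      rw [X_mul_X_add_β6_pow, map_sum, ← Nat.sum_range_choose_mul_choose_succ, Nat.cast_sum,
        sum_mul]
      refine sum_congr rfl fun r hr => ?_
      rw [mem_range] at hr
      rw [β6, binomialEval_C_mul_C_pow_mul_X_pow, show k - r + (r + 1) = k + 1 by omega]
      push_cast
      ring
    rw [Santi, show ((-1) ^ (k + 1) : A6) = C ((-1) ^ (k + 1)) by simp, binomialEval_C_mul, hsum,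
      Ring.choose_neg_natCast_succ]
    push_cast
    ring

/-- In the bialgebra `A = ℤ[β][x]` with coproduct `Δ(xⁿ) = Σ_{i+j=n} xⁱ ⊗ xʲ` and
twisted product `∇_β` (the dual of `Δ_β` on `ℤ[β]⟦x⟧`), the elements
`S(xⁿ) = (-1)ⁿ x(x+β)^{n-1}` satisfy the defining (convolution-inverse) property of the
antipode: `Σ_{i+j=n} ∇_β(S(xⁱ) ⊗ xʲ) = 0` for every `n > 0`. -/
theorem antipode_formula (n : ℕ) (hn : 0 < n) :
    ∑ i ∈ Finset.range (n + 1), nablaB (Santi i) (Polynomial.X ^ (n - i)) = 0 := by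
  refine eq_zero_of_forall_binomialEval_eq_zero isRegular_X fun m => ?_
  have hterm : ∀ i ∈ range (n + 1), binomialEval X m (nablaB (Santi i) (X ^ (n - i))) =
      ((Ring.choose (-(m : ℤ)) i * Ring.choose (m : ℤ) (n - i) : ℤ) : ℤ[X]) * X ^ n := by
    intro i hi
    rw [mem_range] at hi
    have hX : (X : ℤ[X]) ^ n = X ^ i * X ^ (n - i) := by
      rw [← pow_add, Nat.add_sub_cancel' (Nat.le_of_lt_succ hi)]
    rw [binomialEval_nablaB, binomialEval_Santi, binomialEval_X_pow, Ring.choose_natCast, hX]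
    push_cast
    ring
  rw [map_sum, sum_congr rfl hterm, ← sum_mul, ← Int.cast_sum,
    ← Nat.sum_antidiagonal_eq_sum_range_succ
      (fun i j => Ring.choose (-(m : ℤ)) i * Ring.choose (m : ℤ) j),
    ← Ring.add_choose_eq _ (Commute.all _ _), neg_add_cancel, Ring.choose_zero_pos ℤ hn,
    Int.cast_zero, zero_mul]

end
end

section
/- Let K^{(β)}_{(j,N-j)}(x₁,x₂) denote the two-variable truncation of the multipeak quasisymmetric function for a two-part peak composition α = (j, N-j) with j ≥ 2 and N-j ≥ 1. Then K^{(β)}_α(x₁,x₂) = (x₁⊕x₁)(x₁⊕x₂)(x₂⊕x₂)·x₁^{j-2}·x₂^{N-j-1}, where x⊕y := x+y+βxy. -/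
noncomputable section
open Finset

/-- `β` inside `ℤ[β][x₁,x₂]`, realized as `MvPolynomial (Fin 2) ℤ[β]`. -/
def β10 : MvPolynomial (Fin 2) (Polynomial ℤ) := MvPolynomial.C Polynomial.X

open scoped Classical in
/-- The two-variable truncation `K^{(β)}_α(x₁,x₂)` of the multipeak quasisymmetric
function, for the two-part peak composition `α = (j, N-j)` (so `I(α) = {j}`).
The marked alphabet `𝕄 = {1' < 1 < 2' < 2 < ⋯}` truncated to `{1',1,2',2}` is encoded as
`{1,2,3,4}` (odd = primed, `|m| = ⌈m/2⌉`); the sum runs over `N`-tuples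
`S₁ ⪯ S₂ ⪯ ⋯ ⪯ S_N` of nonempty subsets, where consecutive intersections consist only of
primed letters at position `i ∈ I(α)` and only of unprimed letters at positions
`i ∉ I(α)`, weighted by `β^{|S|-N}·x^{S₁}⋯x^{S_N}` with `x^S = ∏_{m∈S} x_{|m|}`. -/
def Ktrunc (N j : ℕ) : MvPolynomial (Fin 2) (Polynomial ℤ) :=
  ∑ S ∈ (Fintype.piFinset fun _ : Fin N => ({1, 2, 3, 4} : Finset ℕ).powerset).filter
      (fun S =>
        (∀ i : Fin N, (S i).Nonempty) ∧
        (∀ i i' : Fin N, (i' : ℕ) = (i : ℕ) + 1 →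
          (∀ a ∈ S i, ∀ b ∈ S i', a ≤ b) ∧
          (∀ m ∈ S i ∩ S i',
            if (i : ℕ) + 1 = j then m % 2 = 1 else m % 2 = 0))),
    β10 ^ ((∑ i, (S i).card) - N) *
      ∏ i : Fin N, ∏ m ∈ S i, MvPolynomial.X (if m ≤ 2 then (0 : Fin 2) else 1)

/-- `x ⊕ y := x + y + β·x·y` in `ℤ[β][x₁,x₂]`. -/
def opl (x y : MvPolynomial (Fin 2) (Polynomial ℤ)) : MvPolynomial (Fin 2) (Polynomial ℤ) :=
  x + y + β10 * x * y

set_option linter.unusedSectionVars false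
set_option maxHeartbeats 2000000

namespace KtruncAux

def mon (s : Finset ℕ) : MvPolynomial (Fin 2) (Polynomial ℤ) :=
  ∏ m ∈ s, MvPolynomial.X (if m ≤ 2 then (0 : Fin 2) else 1)

def pos (j : ℕ) (a b c : Finset ℕ) (k : ℕ) : Finset ℕ :=
  if k = 0 then a else if k + 1 < j then {2} else if k + 1 = j then b
  else if k = j then c else {4}

lemma eq_of_pair {s : Finset ℕ} {x y : ℕ} (hxy : x ≠ y)
    (h : ∀ m ∈ s, m = x ∨ m = y) (hne : s.Nonempty) :
    s = {x} ∨ s = {y} ∨ s = {x, y} := by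
  by_cases hx : x ∈ s <;> by_cases hy : y ∈ s
  · refine Or.inr (Or.inr (Finset.Subset.antisymm ?_ ?_))
    · intro m hm; rcases h m hm with rfl | rfl <;> simp
    · intro m hm
      simp only [Finset.mem_insert, Finset.mem_singleton] at hm
      rcases hm with rfl | rfl <;> assumption
  · refine Or.inl (Finset.eq_singleton_iff_nonempty_unique_mem.mpr ⟨hne, fun m hm => ?_⟩)
    exact (h m hm).resolve_right fun e => hy (e ▸ hm)
  · refine Or.inr (Or.inl (Finset.eq_singleton_iff_nonempty_unique_mem.mpr
      ⟨hne, fun m hm => ?_⟩))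
    exact (h m hm).resolve_left fun e => hx (e ▸ hm)
  · exfalso; obtain ⟨m, hm⟩ := hne; rcases h m hm with rfl | rfl <;> contradiction

lemma sum_three {M : Type*} [AddCommMonoid M] {x y z : Finset ℕ}
    (hxy : x ≠ y) (hxz : x ≠ z) (hyz : y ≠ z) (f : Finset ℕ → M) :
    ∑ s ∈ ({x, y, z} : Finset (Finset ℕ)), f s = f x + f y + f z := by
  rw [Finset.sum_insert (by simp [hxy, hxz]), Finset.sum_insert (by simp [hyz]),
    Finset.sum_singleton, add_assoc]

lemma mon_1 : mon {1} = MvPolynomial.X 0 := by norm_num [mon]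
lemma mon_2 : mon {2} = MvPolynomial.X 0 := by norm_num [mon]
lemma mon_3 : mon {3} = MvPolynomial.X 1 := by norm_num [mon]
lemma mon_4 : mon {4} = MvPolynomial.X 1 := by norm_num [mon]
lemma mon_12 : mon {1, 2} = MvPolynomial.X 0 * MvPolynomial.X 0 := by
  rw [mon, Finset.prod_insert (by decide), Finset.prod_singleton]; norm_num
lemma mon_23 : mon {2, 3} = MvPolynomial.X 0 * MvPolynomial.X 1 := by
  rw [mon, Finset.prod_insert (by decide), Finset.prod_singleton]; norm_num
lemma mon_34 : mon {3, 4} = MvPolynomial.X 1 * MvPolynomial.X 1 := by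
  rw [mon, Finset.prod_insert (by decide), Finset.prod_singleton]; norm_num

section Classify

variable {N j : ℕ} {S : Fin N → Finset ℕ}
  (h2 : 2 ≤ j) (hj : j < N)
  (hsub : ∀ (k : ℕ) (hk : k < N), ∀ m ∈ S ⟨k, hk⟩, m = 1 ∨ m = 2 ∨ m = 3 ∨ m = 4)
  (hne : ∀ i : Fin N, (S i).Nonempty)
  (hle : ∀ (k : ℕ) (h : k + 1 < N), ∀ a ∈ S ⟨k, by omega⟩, ∀ b ∈ S ⟨k + 1, h⟩, a ≤ b)
  (hpar : ∀ (k : ℕ) (h : k + 1 < N), ∀ m ∈ S ⟨k, by omega⟩ ∩ S ⟨k + 1, h⟩,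
      if k + 1 = j then m % 2 = 1 else m % 2 = 0)

omit h2 hj hsub hne hle hpar in
lemma Seq {k k' : ℕ} (hk : k < N) (hk' : k' < N) (e : k = k') :
    S ⟨k, hk⟩ = S ⟨k', hk'⟩ := by subst e; rfl

include h2 hj hsub hne hle hpar

/-- if 4 appears at index k then it propagates to all later indices. -/
lemma four_prop {k : ℕ} (hk : k < N) (h4 : 4 ∈ S ⟨k, hk⟩) :
    ∀ m, k ≤ m → ∀ (hm : m < N), 4 ∈ S ⟨m, hm⟩ := by
  intro m hkm
  induction m, hkm using Nat.le_induction with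
  | base => intro hm; rwa [Seq (S := S) hm hk rfl]
  | succ m hkm ih =>
    intro hm
    have hmN : m < N := by omega
    have h4m := ih hmN
    obtain ⟨b, hb⟩ := hne ⟨m + 1, hm⟩
    have hb4 : b = 4 := by
      have h1 := hle m hm 4 h4m b hb
      have h2' := hsub (m + 1) hm b hb
      omega
    rwa [← hb4]

lemma four_ge {k : ℕ} (hk : k < N) (h4 : 4 ∈ S ⟨k, hk⟩) : j ≤ k := by
  by_contra hlt
  push_neg at hlt
  have hj1 : j - 1 < N := by omega
  have hjN : j < N := hj
  have ha : 4 ∈ S ⟨j - 1, hj1⟩ := four_prop h2 hj hsub hne hle hpar hk h4 (j - 1) (by omega) hj1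
  have hbb : 4 ∈ S ⟨j, hjN⟩ := four_prop h2 hj hsub hne hle hpar hk h4 j (by omega) hjN
  have hj1' : j - 1 + 1 = j := by omega
  have hmem : (4 : ℕ) ∈ S ⟨j - 1, hj1⟩ ∩ S ⟨j - 1 + 1, by omega⟩ := by
    rw [Finset.mem_inter]
    exact ⟨ha, by rw [Seq (S := S) (by omega) hjN hj1']; exact hbb⟩
  have hp := hpar (j - 1) (by omega) 4 hmem
  rw [if_pos hj1'] at hp
  omega

lemma one_step {k : ℕ} (h : k + 1 < N) (h1 : 1 ∈ S ⟨k + 1, h⟩) :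
    1 ∈ S ⟨k, by omega⟩ ∧ k + 1 = j := by
  obtain ⟨a, ha⟩ := hne ⟨k, by omega⟩
  have ha1 : a = 1 := by
    have h1' := hle k h a ha 1 h1
    have h2' := hsub k (by omega) a ha
    omega
  subst ha1
  refine ⟨ha, ?_⟩
  have hp := hpar k h 1 (Finset.mem_inter.mpr ⟨ha, h1⟩)
  by_contra hne'
  rw [if_neg hne'] at hp
  omega

lemma one_eq_zero {k : ℕ} (hk : k < N) (h1 : 1 ∈ S ⟨k, hk⟩) : k = 0 := by
  by_contra h0
  obtain ⟨m, rfl⟩ : ∃ m, k = m + 1 := ⟨k - 1, by omega⟩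
  obtain ⟨h1m, hjm⟩ := one_step h2 hj hsub hne hle hpar hk h1
  have hm0 : m ≠ 0 := by omega
  obtain ⟨l, rfl⟩ : ∃ l, m = l + 1 := ⟨m - 1, by omega⟩
  obtain ⟨_, hjl⟩ := one_step h2 hj hsub hne hle hpar (by omega) h1m
  omega

lemma ge_j : ∀ k, j ≤ k → ∀ (hk : k < N), ∀ m ∈ S ⟨k, hk⟩, 3 ≤ m := by
  intro k hjk
  induction k, hjk using Nat.le_induction with
  | base =>
    intro hk m hm
    have hm14 := hsub j hk m hm
    have hm1 : m ≠ 1 := fun e => by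
      have := one_eq_zero h2 hj hsub hne hle hpar hk (e ▸ hm); omega
    have hm2 : m ≠ 2 := by
      intro e
      subst e
      obtain ⟨a, ha⟩ := hne ⟨j - 1, by omega⟩
      have hmj : (2 : ℕ) ∈ S ⟨j - 1 + 1, by omega⟩ := by
        rw [Seq (S := S) (by omega) hk (by omega)]; exact hm
      have ha2 : a = 2 := by
        have h1' := hle (j - 1) (by omega) a ha 2 hmj
        have h2' := hsub (j - 1) (by omega) a ha
        have ha1 : a ≠ 1 := fun e => by
          have := one_eq_zero h2 hj hsub hne hle hpar (show j - 1 < N by omega) (e ▸ ha)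
          omega
        omega
      subst ha2
      have hp := hpar (j - 1) (by omega) 2 (Finset.mem_inter.mpr ⟨ha, hmj⟩)
      rw [if_pos (by omega)] at hp
      omega
    omega
  | succ k hjk ih =>
    intro hk m hm
    have hkN : k < N := by omega
    have hm14 := hsub (k + 1) hk m hm
    have hm1 : m ≠ 1 := fun e => by
      have := one_eq_zero h2 hj hsub hne hle hpar hk (e ▸ hm); omega
    by_contra hlt
    obtain ⟨a, ha⟩ := hne ⟨k, hkN⟩
    have h3 := ih hkN a ha
    have := hle k hk a ha m hm
    omega

lemma top_eq {k : ℕ} (hjk : j < k) (hk : k < N) : S ⟨k, hk⟩ = {4} := by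
  rw [Finset.eq_singleton_iff_nonempty_unique_mem]
  refine ⟨hne _, fun m hm => ?_⟩
  have hm14 := hsub k hk m hm
  have hm3 := ge_j h2 hj hsub hne hle hpar k (by omega) hk m hm
  by_contra hm4
  have hm3' : m = 3 := by omega
  subst hm3'
  obtain ⟨a, ha⟩ := hne ⟨k - 1, by omega⟩
  have hmk : (3 : ℕ) ∈ S ⟨k - 1 + 1, by omega⟩ := by
    rw [Seq (S := S) (by omega) hk (by omega)]; exact hm
  have ha3 : a = 3 := by
    have h1' := hle (k - 1) (by omega) a ha 3 hmk
    have h2' := ge_j h2 hj hsub hne hle hpar (k - 1) (by omega) (by omega) a ha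
    omega
  subst ha3
  have hp := hpar (k - 1) (by omega) 3 (Finset.mem_inter.mpr ⟨ha, hmk⟩)
  rw [if_neg (by omega)] at hp
  omega

lemma low_sub {k : ℕ} (hk : k < N) (hkj : k + 1 < j) : ∀ m ∈ S ⟨k, hk⟩, m ≤ 2 := by
  intro m hm
  have hm14 := hsub k hk m hm
  have hm4 : m ≠ 4 := fun e => by
    have := four_ge h2 hj hsub hne hle hpar hk (e ▸ hm); omega
  by_contra hgt
  have hm3 : m = 3 := by omega
  subst hm3
  have hk1 : k + 1 < N := by omega
  obtain ⟨b, hb⟩ := hne ⟨k + 1, hk1⟩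
  have hb3 : 3 ≤ b := hle k hk1 3 hm b hb
  have hb14 := hsub (k + 1) hk1 b hb
  have hbne3 : b ≠ 3 := by
    intro e
    subst e
    have hp := hpar k hk1 3 (Finset.mem_inter.mpr ⟨hm, hb⟩)
    rw [if_neg (by omega)] at hp
    omega
  have hb4 : b = 4 := by omega
  subst hb4
  have := four_ge h2 hj hsub hne hle hpar hk1 hb
  omega

lemma mid_eq {k : ℕ} (hk : k < N) (h0 : k ≠ 0) (hkj : k + 1 < j) : S ⟨k, hk⟩ = {2} := by
  rw [Finset.eq_singleton_iff_nonempty_unique_mem]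
  refine ⟨hne _, fun m hm => ?_⟩
  have := low_sub h2 hj hsub hne hle hpar hk hkj m hm
  have := hsub k hk m hm
  have : m ≠ 1 := fun e => by
    have := one_eq_zero h2 hj hsub hne hle hpar hk (e ▸ hm); omega
  omega

lemma a_mem : ∀ m ∈ S ⟨0, by omega⟩, m = 1 ∨ m = 2 := by
  intro m hm
  have := low_sub h2 hj hsub hne hle hpar (by omega) (by omega) m hm
  have := hsub 0 (by omega) m hm
  omega

lemma b_mem : ∀ m ∈ S ⟨j - 1, by omega⟩, m = 2 ∨ m = 3 := by
  intro m hm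
  have h14 := hsub (j - 1) (by omega) m hm
  have hm1 : m ≠ 1 := fun e => by
    have := one_eq_zero h2 hj hsub hne hle hpar (show j - 1 < N by omega) (e ▸ hm); omega
  have hm4 : m ≠ 4 := fun e => by
    have := four_ge h2 hj hsub hne hle hpar (show j - 1 < N by omega) (e ▸ hm); omega
  omega

lemma c_mem : ∀ m ∈ S ⟨j, hj⟩, m = 3 ∨ m = 4 := by
  intro m hm
  have := ge_j h2 hj hsub hne hle hpar j le_rfl hj m hm
  have := hsub j hj m hm
  omega

lemma S_eq_pos : S = fun i : Fin N =>
    pos j (S ⟨0, by omega⟩) (S ⟨j - 1, by omega⟩) (S ⟨j, hj⟩) (i : ℕ) := by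
  funext i
  unfold pos
  rcases i with ⟨k, hk⟩
  simp only
  split_ifs with e1 e2 e3 e4
  · exact Seq (S := S) hk (by omega) e1
  · exact mid_eq h2 hj hsub hne hle hpar hk e1 e2
  · exact Seq (S := S) hk (by omega) (by omega)
  · exact Seq (S := S) hk hj e4
  · exact top_eq h2 hj hsub hne hle hpar (by omega) hk

end Classify

section Valid

variable {j : ℕ} {a b c : Finset ℕ}
  (h2 : 2 ≤ j)
  (ham : ∀ m ∈ a, m = 1 ∨ m = 2) (hbm : ∀ m ∈ b, m = 2 ∨ m = 3)
  (hcm : ∀ m ∈ c, m = 3 ∨ m = 4)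
  (hane : a.Nonempty) (hbne : b.Nonempty) (hcne : c.Nonempty)

include h2 ham hbm hcm in
lemma pos_range {k m : ℕ} (hm : m ∈ pos j a b c k) :
    (k = 0 ∧ (m = 1 ∨ m = 2)) ∨ (k ≠ 0 ∧ k + 1 < j ∧ m = 2) ∨
    (k + 1 = j ∧ (m = 2 ∨ m = 3)) ∨ (k = j ∧ (m = 3 ∨ m = 4)) ∨ (j < k ∧ m = 4) := by
  unfold pos at hm
  split_ifs at hm with e1 e2 e3 e4
  · exact Or.inl ⟨e1, ham m hm⟩
  · rw [Finset.mem_singleton] at hm; exact Or.inr (Or.inl ⟨e1, e2, hm⟩)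
  · exact Or.inr (Or.inr (Or.inl ⟨e3, hbm m hm⟩))
  · exact Or.inr (Or.inr (Or.inr (Or.inl ⟨e4, hcm m hm⟩)))
  · rw [Finset.mem_singleton] at hm
    exact Or.inr (Or.inr (Or.inr (Or.inr ⟨by omega, hm⟩)))

include hane hbne hcne in
lemma pos_nonempty (k : ℕ) : (pos j a b c k).Nonempty := by
  unfold pos
  split_ifs <;> first | assumption | exact ⟨_, Finset.mem_singleton_self _⟩

include h2 ham hbm hcm in
lemma pos_le {k x y : ℕ} (hx : x ∈ pos j a b c k) (hy : y ∈ pos j a b c (k + 1)) :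
    x ≤ y := by
  have d1 := pos_range h2 ham hbm hcm hx
  have d2 := pos_range h2 ham hbm hcm hy
  omega

include h2 ham hbm hcm in
lemma pos_par {k m : ℕ} (hx : m ∈ pos j a b c k) (hy : m ∈ pos j a b c (k + 1)) :
    if k + 1 = j then m % 2 = 1 else m % 2 = 0 := by
  have d1 := pos_range h2 ham hbm hcm hx
  have d2 := pos_range h2 ham hbm hcm hy
  split_ifs <;> omega

include h2 ham hbm hcm in
lemma pos_sub (k : ℕ) : pos j a b c k ⊆ ({1, 2, 3, 4} : Finset ℕ) := by
  intro m hm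
  have := pos_range h2 ham hbm hcm hm
  simp only [Finset.mem_insert, Finset.mem_singleton]
  omega

end Valid

section Weight

variable {N j : ℕ} {a b c : Finset ℕ}
  (h2 : 2 ≤ j) (hj : j < N)
  (hane : a.Nonempty) (hbne : b.Nonempty) (hcne : c.Nonempty)

include h2 in
lemma pos_at_zero : pos j a b c 0 = a := by unfold pos; simp

include h2 in
lemma pos_at_mid {k : ℕ} (h0 : k ≠ 0) (hk : k + 1 < j) : pos j a b c k = {2} := by
  unfold pos; rw [if_neg h0, if_pos hk]

include h2 in
lemma pos_at_b : pos j a b c (j - 1) = b := by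
  unfold pos; rw [if_neg (by omega), if_neg (by omega), if_pos (by omega)]

include h2 in
lemma pos_at_c : pos j a b c j = c := by
  unfold pos; rw [if_neg (by omega), if_neg (by omega), if_neg (by omega), if_pos rfl]

include h2 in
lemma pos_at_top {k : ℕ} (hk : j < k) : pos j a b c k = {4} := by
  unfold pos
  rw [if_neg (by omega), if_neg (by omega), if_neg (by omega), if_neg (by omega)]

include h2 hj hane hbne hcne in
lemma pos_card_sum :
    (∑ i : Fin N, (pos j a b c (i : ℕ)).card)
      = N + (a.card - 1 + (b.card - 1) + (c.card - 1)) := by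
  have ha1 : 1 ≤ a.card := Finset.card_pos.mpr hane
  have hb1 : 1 ≤ b.card := Finset.card_pos.mpr hbne
  have hc1 : 1 ≤ c.card := Finset.card_pos.mpr hcne
  rw [Fin.sum_univ_eq_sum_range (fun k => (pos j a b c k).card) N]
  have hcong : ∀ k ∈ Finset.range N, (pos j a b c k).card =
      1 + ((if k = 0 then a.card - 1 else 0) + (if k = j - 1 then b.card - 1 else 0)
        + (if k = j then c.card - 1 else 0)) := by
    intro k _
    unfold pos
    split_ifs <;> (try simp only [Finset.card_singleton]) <;> omega
  rw [Finset.sum_congr rfl hcong]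
  rw [Finset.sum_add_distrib, Finset.sum_add_distrib, Finset.sum_add_distrib]
  rw [Finset.sum_ite_eq' (Finset.range N) 0 (fun _ => a.card - 1),
    Finset.sum_ite_eq' (Finset.range N) (j - 1) (fun _ => b.card - 1),
    Finset.sum_ite_eq' (Finset.range N) j (fun _ => c.card - 1)]
  rw [if_pos (Finset.mem_range.mpr (by omega)), if_pos (Finset.mem_range.mpr (by omega)),
    if_pos (Finset.mem_range.mpr (by omega))]
  simp [Finset.sum_const, Finset.card_range]

include h2 hj in
lemma pos_prod :
    (∏ i : Fin N, ∏ m ∈ pos j a b c (i : ℕ), MvPolynomial.X (R := Polynomial ℤ)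
        (if m ≤ 2 then (0 : Fin 2) else 1))
      = mon a * mon b * mon c * MvPolynomial.X 0 ^ (j - 2) *
        MvPolynomial.X 1 ^ (N - j - 1) := by
  show (∏ i : Fin N, mon (pos j a b c (i : ℕ))) = _
  rw [Fin.prod_univ_eq_prod_range (fun k => mon (pos j a b c k)) N]
  rw [Finset.range_eq_Ico,
    ← Finset.prod_Ico_consecutive (fun k => mon (pos j a b c k))
      (Nat.zero_le (j - 1)) (show j - 1 ≤ N by omega),
    ← Finset.prod_Ico_consecutive (fun k => mon (pos j a b c k))
      (show j - 1 ≤ j + 1 by omega) (show j + 1 ≤ N by omega)]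
  have e1 : (∏ k ∈ Finset.Ico 0 (j - 1), mon (pos j a b c k))
      = mon a * MvPolynomial.X 0 ^ (j - 2) := by
    rw [Finset.prod_eq_prod_Ico_succ_bot (show 0 < j - 1 by omega)]
    have : ∀ k ∈ Finset.Ico 1 (j - 1), mon (pos j a b c k)
        = MvPolynomial.X (R := Polynomial ℤ) 0 := by
      intro k hk
      rw [Finset.mem_Ico] at hk
      rw [pos_at_mid h2 (by omega) (by omega)]
      simp [mon]
    rw [Finset.prod_congr rfl this, Finset.prod_const, Nat.card_Ico, pos_at_zero h2,
      show j - 1 - 1 = j - 2 by omega]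
  have e2 : (∏ k ∈ Finset.Ico (j - 1) (j + 1), mon (pos j a b c k)) = mon b * mon c := by
    rw [Finset.prod_eq_prod_Ico_succ_bot (show j - 1 < j + 1 by omega)]
    rw [show j - 1 + 1 = j by omega, Nat.Ico_succ_singleton, Finset.prod_singleton]
    rw [pos_at_b h2, pos_at_c h2]
  have e3 : (∏ k ∈ Finset.Ico (j + 1) N, mon (pos j a b c k))
      = MvPolynomial.X 1 ^ (N - j - 1) := by
    have : ∀ k ∈ Finset.Ico (j + 1) N, mon (pos j a b c k)
        = MvPolynomial.X (R := Polynomial ℤ) 1 := by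
      intro k hk
      rw [Finset.mem_Ico] at hk
      rw [pos_at_top h2 (by omega)]
      simp [mon]
    rw [Finset.prod_congr rfl this, Finset.prod_const, Nat.card_Ico,
      show N - (j + 1) = N - j - 1 by omega]
  rw [e1, e2, e3]
  ring

end Weight

end KtruncAux


/-- For a two-part peak composition `α = (j, N-j)` with `j ≥ 2` and `N-j ≥ 1`,
`K^{(β)}_α(x₁,x₂) = (x₁⊕x₁)·(x₁⊕x₂)·(x₂⊕x₂)·x₁^{j-2}·x₂^{N-j-1}`. -/
theorem Ktrunc_formula (N j : ℕ) (h2 : 2 ≤ j) (hj : j < N) :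
    Ktrunc N j =
      opl (MvPolynomial.X 0) (MvPolynomial.X 0) *
        opl (MvPolynomial.X 0) (MvPolynomial.X 1) *
        opl (MvPolynomial.X 1) (MvPolynomial.X 1) *
        MvPolynomial.X 0 ^ (j - 2) * MvPolynomial.X 1 ^ (N - j - 1) := by
  classical
  have h0N : 0 < N := by omega
  have hj1N : j - 1 < N := by omega
  rw [Ktrunc]
  rw [show (∑ S ∈ (Fintype.piFinset fun _ : Fin N =>
        ({1, 2, 3, 4} : Finset ℕ).powerset).filter
      (fun S =>
        (∀ i : Fin N, (S i).Nonempty) ∧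
        (∀ i i' : Fin N, (i' : ℕ) = (i : ℕ) + 1 →
          (∀ a ∈ S i, ∀ b ∈ S i', a ≤ b) ∧
          (∀ m ∈ S i ∩ S i',
            if (i : ℕ) + 1 = j then m % 2 = 1 else m % 2 = 0))),
      β10 ^ ((∑ i, (S i).card) - N) *
        ∏ i : Fin N, ∏ m ∈ S i, MvPolynomial.X (if m ≤ 2 then (0 : Fin 2) else 1))
    = ∑ p ∈ ({{1}, {2}, {1, 2}} : Finset (Finset ℕ)) ×ˢ
        (({{2}, {3}, {2, 3}} : Finset (Finset ℕ)) ×ˢ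
          ({{3}, {4}, {3, 4}} : Finset (Finset ℕ))),
      β10 ^ (p.1.card - 1 + (p.2.1.card - 1) + (p.2.2.card - 1)) *
        (KtruncAux.mon p.1 * KtruncAux.mon p.2.1 * KtruncAux.mon p.2.2 *
          MvPolynomial.X 0 ^ (j - 2) * MvPolynomial.X 1 ^ (N - j - 1)) from ?_]
  · -- evaluate the 27-term sum
    simp only [Finset.sum_product]
    have hA3 : ∀ f : Finset ℕ → MvPolynomial (Fin 2) (Polynomial ℤ),
        ∑ s ∈ ({{1}, {2}, {1, 2}} : Finset (Finset ℕ)), f s = f {1} + f {2} + f {1, 2} :=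
      fun f => KtruncAux.sum_three (by decide) (by decide) (by decide) f
    have hB3 : ∀ f : Finset ℕ → MvPolynomial (Fin 2) (Polynomial ℤ),
        ∑ s ∈ ({{2}, {3}, {2, 3}} : Finset (Finset ℕ)), f s = f {2} + f {3} + f {2, 3} :=
      fun f => KtruncAux.sum_three (by decide) (by decide) (by decide) f
    have hC3 : ∀ f : Finset ℕ → MvPolynomial (Fin 2) (Polynomial ℤ),
        ∑ s ∈ ({{3}, {4}, {3, 4}} : Finset (Finset ℕ)), f s = f {3} + f {4} + f {3, 4} :=
      fun f => KtruncAux.sum_three (by decide) (by decide) (by decide) f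
    rw [hA3]
    simp only [hB3, hC3]
    simp only [KtruncAux.mon_1, KtruncAux.mon_2, KtruncAux.mon_12, KtruncAux.mon_3,
      KtruncAux.mon_23, KtruncAux.mon_4, KtruncAux.mon_34,
      show ({1} : Finset ℕ).card = 1 by decide, show ({2} : Finset ℕ).card = 1 by decide,
      show ({3} : Finset ℕ).card = 1 by decide, show ({4} : Finset ℕ).card = 1 by decide,
      show ({1, 2} : Finset ℕ).card = 2 by decide,
      show ({2, 3} : Finset ℕ).card = 2 by decide,
      show ({3, 4} : Finset ℕ).card = 2 by decide]
    norm_num [opl]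
    ring
  · -- the bijection
    refine (Finset.sum_nbij'
      (i := fun p : Finset ℕ × Finset ℕ × Finset ℕ =>
        fun i : Fin N => KtruncAux.pos j p.1 p.2.1 p.2.2 (i : ℕ))
      (j := fun S => (S ⟨0, h0N⟩, S ⟨j - 1, hj1N⟩, S ⟨j, hj⟩))
      ?_ ?_ ?_ ?_ ?_).symm
    · -- pos-tuples land in the filter
      rintro ⟨a, b, c⟩ hp
      rw [Finset.mem_product, Finset.mem_product] at hp
      obtain ⟨hpa, hpb, hpc⟩ := hp
      have ham : ∀ m ∈ a, m = 1 ∨ m = 2 := by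
        intro m hm
        simp only [Finset.mem_insert, Finset.mem_singleton] at hpa
        rcases hpa with rfl | rfl | rfl <;> simp at hm <;> omega
      have hbm : ∀ m ∈ b, m = 2 ∨ m = 3 := by
        intro m hm
        simp only [Finset.mem_insert, Finset.mem_singleton] at hpb
        rcases hpb with rfl | rfl | rfl <;> simp at hm <;> omega
      have hcm : ∀ m ∈ c, m = 3 ∨ m = 4 := by
        intro m hm
        simp only [Finset.mem_insert, Finset.mem_singleton] at hpc
        rcases hpc with rfl | rfl | rfl <;> simp at hm <;> omega
      have hane : a.Nonempty := by
        simp only [Finset.mem_insert, Finset.mem_singleton] at hpa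
        rcases hpa with rfl | rfl | rfl <;> first | exact Finset.singleton_nonempty _ | exact Finset.insert_nonempty _ _
      have hbne : b.Nonempty := by
        simp only [Finset.mem_insert, Finset.mem_singleton] at hpb
        rcases hpb with rfl | rfl | rfl <;> first | exact Finset.singleton_nonempty _ | exact Finset.insert_nonempty _ _
      have hcne : c.Nonempty := by
        simp only [Finset.mem_insert, Finset.mem_singleton] at hpc
        rcases hpc with rfl | rfl | rfl <;> first | exact Finset.singleton_nonempty _ | exact Finset.insert_nonempty _ _
      rw [Finset.mem_filter]
      refine ⟨Fintype.mem_piFinset.mpr fun i =>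
          Finset.mem_powerset.mpr (KtruncAux.pos_sub h2 ham hbm hcm _),
        fun i => KtruncAux.pos_nonempty hane hbne hcne _, fun i i' hii' => ⟨?_, ?_⟩⟩
      · intro x hx y hy
        have hx' : x ∈ KtruncAux.pos j a b c (↑i) := by simpa using hx
        have hy' : y ∈ KtruncAux.pos j a b c (↑i + 1) := by simpa only [hii'] using hy
        exact KtruncAux.pos_le h2 ham hbm hcm hx' hy'
      · intro m hm
        rw [Finset.mem_inter] at hm
        obtain ⟨hm1, hm2⟩ := hm
        have hm1' : m ∈ KtruncAux.pos j a b c (↑i) := by simpa using hm1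
        have hm2' : m ∈ KtruncAux.pos j a b c (↑i + 1) := by simpa only [hii'] using hm2
        exact KtruncAux.pos_par h2 ham hbm hcm hm1' hm2' 
    · -- extracted triples land in the product
      intro S hS
      rw [Finset.mem_filter] at hS
      obtain ⟨hpi, hne', hpair⟩ := hS
      have hsub : ∀ (k : ℕ) (hk : k < N), ∀ m ∈ S ⟨k, hk⟩, m = 1 ∨ m = 2 ∨ m = 3 ∨ m = 4 := by
        intro k hk m hm
        have := Finset.mem_powerset.mp (Fintype.mem_piFinset.mp hpi ⟨k, hk⟩) hm
        simpa using this
      have hle : ∀ (k : ℕ) (h : k + 1 < N), ∀ x ∈ S ⟨k, by omega⟩, ∀ y ∈ S ⟨k + 1, h⟩, x ≤ y :=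
        fun k h => (hpair ⟨k, by omega⟩ ⟨k + 1, h⟩ rfl).1
      have hpar : ∀ (k : ℕ) (h : k + 1 < N), ∀ m ∈ S ⟨k, by omega⟩ ∩ S ⟨k + 1, h⟩,
          if k + 1 = j then m % 2 = 1 else m % 2 = 0 :=
        fun k h => (hpair ⟨k, by omega⟩ ⟨k + 1, h⟩ rfl).2
      rw [Finset.mem_product, Finset.mem_product]
      refine ⟨?_, ?_, ?_⟩
      · have := KtruncAux.eq_of_pair (show (1 : ℕ) ≠ 2 by omega)
          (KtruncAux.a_mem h2 hj hsub hne' hle hpar) (hne' _)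
        simp only [Finset.mem_insert, Finset.mem_singleton]
        tauto
      · have := KtruncAux.eq_of_pair (show (2 : ℕ) ≠ 3 by omega)
          (KtruncAux.b_mem h2 hj hsub hne' hle hpar) (hne' _)
        simp only [Finset.mem_insert, Finset.mem_singleton]
        tauto
      · have := KtruncAux.eq_of_pair (show (3 : ℕ) ≠ 4 by omega)
          (KtruncAux.c_mem h2 hj hsub hne' hle hpar) (hne' _)
        simp only [Finset.mem_insert, Finset.mem_singleton]
        tauto
    · -- left inverse
      rintro ⟨a, b, c⟩ hp
      show (KtruncAux.pos j a b c 0, KtruncAux.pos j a b c (j - 1),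
        KtruncAux.pos j a b c j) = (a, b, c)
      rw [KtruncAux.pos_at_zero h2, KtruncAux.pos_at_b h2, KtruncAux.pos_at_c h2]
    · -- right inverse
      intro S hS
      rw [Finset.mem_filter] at hS
      obtain ⟨hpi, hne', hpair⟩ := hS
      have hsub : ∀ (k : ℕ) (hk : k < N), ∀ m ∈ S ⟨k, hk⟩, m = 1 ∨ m = 2 ∨ m = 3 ∨ m = 4 := by
        intro k hk m hm
        have := Finset.mem_powerset.mp (Fintype.mem_piFinset.mp hpi ⟨k, hk⟩) hm
        simpa using this
      have hle : ∀ (k : ℕ) (h : k + 1 < N), ∀ x ∈ S ⟨k, by omega⟩, ∀ y ∈ S ⟨k + 1, h⟩, x ≤ y :=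
        fun k h => (hpair ⟨k, by omega⟩ ⟨k + 1, h⟩ rfl).1
      have hpar : ∀ (k : ℕ) (h : k + 1 < N), ∀ m ∈ S ⟨k, by omega⟩ ∩ S ⟨k + 1, h⟩,
          if k + 1 = j then m % 2 = 1 else m % 2 = 0 :=
        fun k h => (hpair ⟨k, by omega⟩ ⟨k + 1, h⟩ rfl).2
      exact (KtruncAux.S_eq_pos h2 hj hsub hne' hle hpar).symm
    · -- weights agree
      rintro ⟨a, b, c⟩ hp
      rw [Finset.mem_product, Finset.mem_product] at hp
      obtain ⟨hpa, hpb, hpc⟩ := hp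
      have hane : a.Nonempty := by
        simp only [Finset.mem_insert, Finset.mem_singleton] at hpa
        rcases hpa with rfl | rfl | rfl <;> first | exact Finset.singleton_nonempty _ | exact Finset.insert_nonempty _ _
      have hbne : b.Nonempty := by
        simp only [Finset.mem_insert, Finset.mem_singleton] at hpb
        rcases hpb with rfl | rfl | rfl <;> first | exact Finset.singleton_nonempty _ | exact Finset.insert_nonempty _ _
      have hcne : c.Nonempty := by
        simp only [Finset.mem_insert, Finset.mem_singleton] at hpc
        rcases hpc with rfl | rfl | rfl <;> first | exact Finset.singleton_nonempty _ | exact Finset.insert_nonempty _ _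
      simp only
      rw [KtruncAux.pos_card_sum h2 hj hane hbne hcne, KtruncAux.pos_prod h2 hj,
        Nat.add_sub_cancel_left]

end
end

section
/- Define box-adding operators on the free module spanned by strict partitions: a_n adds a box on the n-th diagonal of the shifted diagram if possible, multiplies by β if there is a removable box on the n-th diagonal, and gives 0 otherwise; set A_i(x) := 1 + x·a_i. Then A_i(x) and A_j(y) commute whenever |i-j| > 1. -/
noncomputable section
open Finset

/-- A strict partition: a strictly decreasing list of positive integers. -/
def StrictPartition : Type := {l : List ℕ // l.Chain' (· > ·) ∧ ∀ x ∈ l, 0 < x}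

/-- The shifted diagram of a list `l = (l₁, l₂, …)`:
`SD = {(i, i+j-1) : 1 ≤ i ≤ length l, 1 ≤ j ≤ lᵢ}` (rows and columns indexed from 1). -/
def shiftedDiagram (l : List ℕ) : Finset (ℕ × ℕ) :=
  (Finset.Icc 1 l.length ×ˢ Finset.Icc 1 (l.length + l.sum)).filter
    fun p => p.1 ≤ p.2 ∧ p.2 < p.1 + l.getD (p.1 - 1) 0

/-- The shifted diagram of a strict partition. -/
def SD (μ : StrictPartition) : Finset (ℕ × ℕ) := shiftedDiagram μ.1

/-- `c` is a removable box of the strict partition `μ`: `c ∈ SD μ` and deleting `c`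
yields the shifted diagram of a strict partition. -/
def IsRemovable (μ : StrictPartition) (c : ℕ × ℕ) : Prop :=
  c ∈ SD μ ∧ ∃ ν : StrictPartition, SD ν = (SD μ).erase c

/-- `c` is an addable box of the strict partition `μ`: `c ∉ SD μ` and adjoining `c`
yields the shifted diagram of a strict partition. -/
def IsAddable (μ : StrictPartition) (c : ℕ × ℕ) : Prop :=
  c ∉ SD μ ∧ ∃ ν : StrictPartition, SD ν = insert c (SD μ)

open scoped Classical in
/-- The diagonal box-adding operator `a_n` on basis elements: `a_n μ = β·μ` if `μ` has a
removable box on diagonal `n`; `a_n μ = ν` if `SD ν = SD μ ⊔ {(i,j)}` with `j - i = n`;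
and `a_n μ = 0` otherwise. -/
def aRaw {R : Type*} [CommRing R] (β : R) (n : ℕ) (μ : StrictPartition) :
    StrictPartition →₀ R :=
  if ∃ c : ℕ × ℕ, IsRemovable μ c ∧ c.2 = c.1 + n then Finsupp.single μ β
  else if h : ∃ ν : StrictPartition, ∃ c : ℕ × ℕ, c.2 = c.1 + n ∧ c ∉ SD μ ∧
      SD ν = insert c (SD μ) then
    Finsupp.single h.choose 1
  else 0

/-- The operator `a_n`, extended linearly to the free module on strict partitions. -/
def aOp {R : Type*} [CommRing R] (β : R) (n : ℕ) :
    (StrictPartition →₀ R) →ₗ[R] (StrictPartition →₀ R) :=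
  Finsupp.lift (StrictPartition →₀ R) R StrictPartition (aRaw β n)

/-- The operator `A_i(x) := 1 + x·a_i`. -/
def AOp {R : Type*} [CommRing R] (β : R) (i : ℕ) (x : R) :
    (StrictPartition →₀ R) →ₗ[R] (StrictPartition →₀ R) :=
  LinearMap.id + x • aOp β i


/-!
A strict partition is encoded by its row-length function `g : ℕ → ℕ`, which decreases strictly
until it vanishes. Adding a box on diagonal `n` raises a row of length `n` to `n + 1`, and a
removable box on diagonal `n` is a row of length `n + 1` that may be lowered to `n`. When
`|i - j| > 1` the value sets `{i, i + 1}` and `{j, j + 1}` are disjoint and one lies strictly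
above the other, so changes on diagonals `i` and `j` happen in different rows, and admissibility
of the result is decided by comparisons of neighbouring rows that the other change does not
affect: of the four corners of such a square of changes, any three being partitions forces the
fourth. Hence `a_i` and `a_j` commute on every basis element, and so do `A_i(x) = 1 + x a_i` and
`A_j(y) = 1 + y a_j`.
-/

open Function

def IsRowLengths (g : ℕ → ℕ) : Prop :=
  ∀ s, g (s + 1) < g s ∨ (g s = 0 ∧ g (s + 1) = 0)

namespace IsRowLengths

variable {g : ℕ → ℕ}

theorem eq_zero_of_le (hg : IsRowLengths g) {k m : ℕ} (hk : g k = 0) (hkm : k ≤ m) :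
    g m = 0 := by
  induction m, hkm using Nat.le_induction with
  | base => exact hk
  | succ m _ ih => have := hg m; omega

theorem lt_of_lt_of_pos (hg : IsRowLengths g) {k m : ℕ} (hkm : k < m) (hm : 0 < g m) :
    g m < g k := by
  induction m, hkm using Nat.le_induction with
  | base => exact (hg k).resolve_right fun h => hm.ne' h.2
  | succ m _ ih => have := hg m; have := ih (by omega); omega

theorem exists_eq_zero (hg : IsRowLengths g) : ∃ k, g k = 0 := by
  have bound : ∀ k, g k = 0 ∨ g k + k ≤ g 0 := by
    intro k
    induction k with
    | zero => omega
    | succ k ih => have := hg k; omega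
  exact ⟨g 0 + 1, by have := bound (g 0 + 1); omega⟩

theorem eq_of_update_succ (hg : IsRowLengths g) {k k' n : ℕ} (hk : g k = n) (hk' : g k' = n)
    (h : IsRowLengths (update g k (n + 1))) (h' : IsRowLengths (update g k' (n + 1))) :
    k = k' := by
  have key : ∀ a b, a < b → g a = n → g b = n → ¬ IsRowLengths (update g b (n + 1)) := by
    intro a b hab ha hb hgb
    rcases Nat.eq_zero_or_pos n with rfl | hn
    · obtain ⟨c, rfl⟩ : ∃ c, b = c + 1 := ⟨b - 1, by omega⟩
      have hc : g c = 0 := hg.eq_zero_of_le ha (by omega)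
      have := hgb c
      rw [update_self, update_of_ne (by omega)] at this
      omega
    · have := hg.lt_of_lt_of_pos hab (by omega)
      omega
  rcases Nat.lt_trichotomy k k' with hlt | heq | hgt
  · exact (key k k' hlt hk hk' h').elim
  · exact heq
  · exact (key k' k hgt hk' hk h).elim

/-- Every comparison of neighbouring rows involves at most one of the two changes, or compares
values too far apart for the changes to matter. -/
theorem update_update {G : ℕ → ℕ} {i j k m u v : ℕ} (hij : i + 1 < j ∨ j + 1 < i)
    (hk : G k = j ∨ G k = j + 1) (hu : u = j ∨ u = j + 1)
    (hm : G m = i ∨ G m = i + 1) (hv : v = i ∨ v = i + 1)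
    (hG : IsRowLengths G) (hGk : IsRowLengths (update G k u))
    (hGm : IsRowLengths (update G m v)) :
    IsRowLengths (update (update G k u) m v) := by
  intro s
  have h₀ := hG s
  have h₁ := hGk s
  have h₂ := hGm s
  simp only [update_apply] at h₁ h₂ ⊢
  split_ifs at h₁ h₂ ⊢ <;> subst_vars <;> omega

end IsRowLengths

namespace StrictPartition

/-- `rowLen μ k` is the length of row `k + 1` of `SD μ`, and `0` below the last row. -/
def rowLen (μ : StrictPartition) (k : ℕ) : ℕ := μ.1.getD k 0

theorem isRowLengths_rowLen (μ : StrictPartition) : IsRowLengths μ.rowLen := by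
  obtain ⟨l, hc, hp⟩ := μ
  intro s
  simp only [rowLen]
  by_cases h1 : s + 1 < l.length
  · left
    rw [List.getD_eq_getElem l 0 h1, List.getD_eq_getElem l 0 (by omega)]
    exact List.isChain_iff_getElem.mp hc s (by omega)
  · by_cases h2 : s < l.length
    · left
      rw [List.getD_eq_default l 0 (by omega), List.getD_eq_getElem l 0 h2]
      exact hp _ (List.getElem_mem h2)
    · right
      rw [List.getD_eq_default l 0 (by omega), List.getD_eq_default l 0 (by omega)]
      exact ⟨rfl, rfl⟩

theorem exists_rowLen_eq {g : ℕ → ℕ} (hg : IsRowLengths g) :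
    ∃ μ : StrictPartition, μ.rowLen = g := by
  classical
  have hex := hg.exists_eq_zero
  set N := Nat.find hex
  have hpos : ∀ k < N, 0 < g k := fun k hk => Nat.pos_of_ne_zero (Nat.find_min hex hk)
  refine ⟨⟨(List.range N).map g, ?_, ?_⟩, funext fun k => ?_⟩
  · refine List.isChain_iff_getElem.mpr fun s hs => ?_
    simp only [List.length_map, List.length_range] at hs
    simp only [List.getElem_map, List.getElem_range]
    have := hg s
    have := hpos s (by omega)
    omega
  · simp only [List.mem_map, List.mem_range]
    rintro _ ⟨k, hk, rfl⟩
    exact hpos k hk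
  · simp only [rowLen]
    by_cases hk : k < N
    · rw [List.getD_eq_getElem _ 0 (by simpa using hk)]
      simp
    · rw [List.getD_eq_default _ 0 (by simpa using hk)]
      exact (hg.eq_zero_of_le (Nat.find_spec hex) (not_lt.mp hk)).symm

theorem rowLen_injective : Injective rowLen := by
  intro μ ν h
  refine Subtype.ext (List.ext_getElem? fun k => ?_)
  have hk := congrFun h k
  simp only [rowLen, List.getD_eq_getElem?_getD] at hk
  rcases hx : μ.1[k]? with _ | a <;> rcases hy : ν.1[k]? with _ | b <;>
    simp only [hx, hy, Option.getD_none, Option.getD_some] at hk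
  · rfl
  · exact absurd hk (ν.2.2 b (List.mem_of_getElem? hy)).ne
  · exact absurd hk (μ.2.2 a (List.mem_of_getElem? hx)).ne'
  · rw [hk]

theorem mem_SD_iff {μ : StrictPartition} {a b : ℕ} :
    (a, b) ∈ SD μ ↔ 1 ≤ a ∧ a ≤ b ∧ b < a + μ.rowLen (a - 1) := by
  obtain ⟨l, -⟩ := μ
  simp only [SD, shiftedDiagram, mem_filter, mem_product, mem_Icc, rowLen]
  refine ⟨fun h => ⟨h.1.1.1, h.2⟩, fun ⟨h1, h2, h3⟩ => ?_⟩
  have hlen : a - 1 < l.length := by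
    by_contra h
    rw [List.getD_eq_default _ 0 (by omega)] at h3
    omega
  have hsum : l.getD (a - 1) 0 ≤ l.sum := by
    rw [List.getD_eq_getElem _ 0 hlen]
    exact List.le_sum_of_mem (List.getElem_mem hlen)
  exact ⟨⟨⟨h1, by omega⟩, by omega, by omega⟩, h2, h3⟩

theorem mem_SD_succ_iff {μ : StrictPartition} {k b : ℕ} :
    (k + 1, b) ∈ SD μ ↔ k + 1 ≤ b ∧ b < k + 1 + μ.rowLen k := by
  simp [mem_SD_iff]

theorem insert_SD_iff {μ ν : StrictPartition} {k n : ℕ} :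
    ((k + 1, k + 1 + n) ∉ SD μ ∧ SD ν = insert (k + 1, k + 1 + n) (SD μ)) ↔
      μ.rowLen k = n ∧ ν.rowLen = update μ.rowLen k (n + 1) := by
  constructor
  · rintro ⟨hc, hν⟩
    have rows : ∀ m b, (m + 1 ≤ b ∧ b < m + 1 + ν.rowLen m) ↔
        (m = k ∧ b = k + 1 + n) ∨ (m + 1 ≤ b ∧ b < m + 1 + μ.rowLen m) := fun m b => by
      rw [← mem_SD_succ_iff, hν, mem_insert, mem_SD_succ_iff, Prod.mk.injEq]
      omega
    rw [mem_SD_succ_iff] at hc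
    have hμk : μ.rowLen k = n := by
      have := rows k (k + 1 + n); have := rows k (k + 1 + μ.rowLen k); omega
    refine ⟨hμk, funext fun m => ?_⟩
    rcases eq_or_ne m k with rfl | hm
    · rw [update_self]
      have := rows m (m + 1 + n + 1); have := rows m (m + 1 + ν.rowLen m); omega
    · rw [update_of_ne hm]
      have := rows m (m + 1 + ν.rowLen m); have := rows m (m + 1 + μ.rowLen m); omega
  · rintro ⟨hμk, hν⟩
    refine ⟨by rw [mem_SD_succ_iff]; omega, ?_⟩
    ext ⟨a, b⟩
    rw [mem_insert, mem_SD_iff, mem_SD_iff, Prod.mk.injEq, hν]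
    rcases eq_or_ne (a - 1) k with ha | ha
    · rw [ha, update_self]; omega
    · rw [update_of_ne ha]; omega

def HasRemovableOn (μ : StrictPartition) (n : ℕ) : Prop :=
  ∃ c : ℕ × ℕ, IsRemovable μ c ∧ c.2 = c.1 + n

def AddsBoxOn (n : ℕ) (μ ν : StrictPartition) : Prop :=
  ∃ c : ℕ × ℕ, c.2 = c.1 + n ∧ c ∉ SD μ ∧ SD ν = insert c (SD μ)

theorem hasRemovableOn_iff {μ : StrictPartition} {n : ℕ} :
    HasRemovableOn μ n ↔ ∃ ρ, AddsBoxOn n ρ μ := by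
  constructor
  · rintro ⟨c, ⟨hc, ρ, hρ⟩, hn⟩
    exact ⟨ρ, c, hn, by simp [hρ], by rw [hρ, insert_erase hc]⟩
  · rintro ⟨ρ, c, hn, hc, hρ⟩
    exact ⟨c, ⟨by simp [hρ], ρ, by rw [hρ, erase_insert hc]⟩, hn⟩

theorem addsBoxOn_iff {n : ℕ} {μ ν : StrictPartition} :
    AddsBoxOn n μ ν ↔ ∃ k, μ.rowLen k = n ∧ ν.rowLen = update μ.rowLen k (n + 1) := by
  constructor
  · rintro ⟨⟨a, b⟩, hb, hc, hν⟩
    have ha : 1 ≤ a := (mem_SD_iff.mp (hν ▸ mem_insert_self _ _)).1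
    obtain ⟨k, rfl⟩ : ∃ k, a = k + 1 := ⟨a - 1, by omega⟩
    obtain rfl : b = k + 1 + n := hb
    exact ⟨k, insert_SD_iff.mp ⟨hc, hν⟩⟩
  · rintro ⟨k, h⟩
    exact ⟨(k + 1, k + 1 + n), rfl, insert_SD_iff.mpr h⟩

theorem AddsBoxOn.unique {n : ℕ} {μ ν ν' : StrictPartition} (h : AddsBoxOn n μ ν)
    (h' : AddsBoxOn n μ ν') : ν = ν' := by
  obtain ⟨k, hk, hν⟩ := addsBoxOn_iff.mp h
  obtain ⟨k', hk', hν'⟩ := addsBoxOn_iff.mp h'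
  obtain rfl := (isRowLengths_rowLen μ).eq_of_update_succ hk hk'
    (hν ▸ isRowLengths_rowLen ν) (hν' ▸ isRowLengths_rowLen ν')
  exact rowLen_injective (hν.trans hν'.symm)

section FarDiagonals

variable {i j : ℕ} {μ ν ρ : StrictPartition}

theorem AddsBoxOn.exists_diamond (hij : i + 1 < j ∨ j + 1 < i) (hν : AddsBoxOn j μ ν)
    (hρ : AddsBoxOn i μ ρ) : ∃ σ, AddsBoxOn i ν σ ∧ AddsBoxOn j ρ σ := by
  obtain ⟨k, hk, hνk⟩ := addsBoxOn_iff.mp hν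
  obtain ⟨m, hm, hρm⟩ := addsBoxOn_iff.mp hρ
  have hkm : k ≠ m := by rintro rfl; omega
  obtain ⟨σ, hσ⟩ := exists_rowLen_eq <| (isRowLengths_rowLen μ).update_update hij
    (.inl hk) (.inr rfl) (.inl hm) (.inr rfl) (hνk ▸ isRowLengths_rowLen ν)
    (hρm ▸ isRowLengths_rowLen ρ)
  refine ⟨σ, addsBoxOn_iff.mpr ⟨m, ?_, ?_⟩, addsBoxOn_iff.mpr ⟨k, ?_, ?_⟩⟩
  · rw [hνk, update_of_ne hkm.symm, hm]
  · rw [hσ, hνk]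
  · rw [hρm, update_of_ne hkm, hk]
  · rw [hσ, hρm, update_comm hkm]

theorem AddsBoxOn.exists_swap (hij : i + 1 < j ∨ j + 1 < i) {σ : StrictPartition}
    (hρ : AddsBoxOn i μ ρ) (hσ : AddsBoxOn j ρ σ) :
    ∃ ν, AddsBoxOn j μ ν ∧ AddsBoxOn i ν σ := by
  obtain ⟨m, hm, hρm⟩ := addsBoxOn_iff.mp hρ
  obtain ⟨k, hk, hσk⟩ := addsBoxOn_iff.mp hσ
  have hkm : k ≠ m := by
    rintro rfl
    rw [hρm, update_self] at hk
    omega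
  have hμ : μ.rowLen = update ρ.rowLen m i := by rw [hρm, update_idem, ← hm, update_eq_self]
  obtain ⟨ν, hν⟩ := exists_rowLen_eq <| (isRowLengths_rowLen ρ).update_update hij.symm
    (.inr (by rw [hρm, update_self])) (.inl rfl) (.inl hk) (.inr rfl)
    (hμ ▸ isRowLengths_rowLen μ) (hσk ▸ isRowLengths_rowLen σ)
  rw [← hμ] at hν
  refine ⟨ν, addsBoxOn_iff.mpr ⟨k, ?_, hν⟩, addsBoxOn_iff.mpr ⟨m, ?_, ?_⟩⟩
  · rw [hμ, update_of_ne hkm, hk]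
  · rw [hν, update_of_ne hkm.symm, hm]
  · rw [hσk, hρm, hν, update_comm hkm]

theorem AddsBoxOn.exists_codiamond (hij : i + 1 < j ∨ j + 1 < i) (hν : AddsBoxOn j μ ν)
    (hρ : AddsBoxOn i ρ ν) : ∃ τ, AddsBoxOn i τ μ ∧ AddsBoxOn j τ ρ := by
  obtain ⟨k, hk, hνk⟩ := addsBoxOn_iff.mp hν
  obtain ⟨m, hm, hνm⟩ := addsBoxOn_iff.mp hρ
  have hkm : k ≠ m := by
    rintro rfl
    have := congrFun hνk k
    have := congrFun hνm k
    simp only [update_self] at *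
    omega
  have hμ : μ.rowLen = update ν.rowLen k j := by rw [hνk, update_idem, ← hk, update_eq_self]
  have hρ' : ρ.rowLen = update ν.rowLen m i := by rw [hνm, update_idem, ← hm, update_eq_self]
  obtain ⟨τ, hτ⟩ := exists_rowLen_eq <| (isRowLengths_rowLen ν).update_update hij
    (.inr (by rw [hνk, update_self])) (.inl rfl) (.inr (by rw [hνm, update_self])) (.inl rfl)
    (hμ ▸ isRowLengths_rowLen μ) (hρ' ▸ isRowLengths_rowLen ρ)
  rw [← hμ] at hτ
  refine ⟨τ, addsBoxOn_iff.mpr ⟨m, ?_, ?_⟩, addsBoxOn_iff.mpr ⟨k, ?_, ?_⟩⟩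
  · rw [hτ, update_self]
  · have hμm : μ.rowLen m = i + 1 := by rw [hμ, update_of_ne hkm.symm, hνm, update_self]
    rw [hτ, update_idem, ← hμm, update_eq_self]
  · rw [hτ, update_of_ne hkm, hk]
  · rw [hτ, ← update_comm hkm, ← hνk, hρ']

theorem AddsBoxOn.hasRemovableOn_iff (hij : i + 1 < j ∨ j + 1 < i) (hν : AddsBoxOn j μ ν) :
    HasRemovableOn ν i ↔ HasRemovableOn μ i := by
  simp only [StrictPartition.hasRemovableOn_iff]
  constructor
  · rintro ⟨ρ, hρ⟩
    obtain ⟨τ, hτ, -⟩ := hν.exists_codiamond hij hρ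
    exact ⟨τ, hτ⟩
  · rintro ⟨τ, hτ⟩
    obtain ⟨ρ, -, hρ⟩ := hτ.exists_swap hij hν
    exact ⟨ρ, hρ⟩

theorem AddsBoxOn.exists_addsBoxOn_iff (hij : i + 1 < j ∨ j + 1 < i) (hν : AddsBoxOn j μ ν) :
    (∃ σ, AddsBoxOn i ν σ) ↔ ∃ ρ, AddsBoxOn i μ ρ := by
  constructor
  · rintro ⟨σ, hσ⟩
    obtain ⟨ρ, hρ, -⟩ := hν.exists_swap hij.symm hσ
    exact ⟨ρ, hρ⟩
  · rintro ⟨ρ, hρ⟩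
    obtain ⟨σ, hσ, -⟩ := hν.exists_diamond hij hρ
    exact ⟨σ, hσ⟩

end FarDiagonals

end StrictPartition

namespace StrictPartition

variable {R : Type*} [CommRing R] (β : R) {n : ℕ} {μ ν : StrictPartition}

theorem aRaw_of_hasRemovableOn (h : HasRemovableOn μ n) : aRaw β n μ = Finsupp.single μ β :=
  if_pos h

theorem aRaw_of_addsBoxOn (hr : ¬ HasRemovableOn μ n) (hν : AddsBoxOn n μ ν) :
    aRaw β n μ = Finsupp.single ν 1 :=
  have hex : ∃ ν, AddsBoxOn n μ ν := ⟨ν, hν⟩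
  (if_neg hr).trans <| (dif_pos hex).trans <|
    congrArg (Finsupp.single · 1) (hex.choose_spec.unique hν)

theorem aRaw_of_not_addsBoxOn (hr : ¬ HasRemovableOn μ n) (ha : ∀ ν, ¬ AddsBoxOn n μ ν) :
    aRaw β n μ = 0 :=
  (if_neg hr).trans (dif_neg (not_exists.mpr ha))

theorem aRaw_cases (n : ℕ) (μ : StrictPartition) :
    (∃ c, aRaw β n μ = Finsupp.single μ c) ∨
      ∃ ν, ¬ HasRemovableOn μ n ∧ AddsBoxOn n μ ν := by
  by_cases hr : HasRemovableOn μ n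
  · exact .inl ⟨β, aRaw_of_hasRemovableOn β hr⟩
  by_cases ha : ∃ ν, AddsBoxOn n μ ν
  · obtain ⟨ν, hν⟩ := ha
    exact .inr ⟨ν, hr, hν⟩
  · exact .inl ⟨0, by rw [aRaw_of_not_addsBoxOn β hr (not_exists.mp ha), Finsupp.single_zero]⟩

theorem aOp_single (n : ℕ) (μ : StrictPartition) (c : R) :
    aOp β n (Finsupp.single μ c) = c • aRaw β n μ := by
  rw [aOp, Finsupp.lift_apply, Finsupp.sum_single_index (zero_smul R (aRaw β n μ))]

variable {i j : ℕ}

theorem aRaw_of_addsBoxOn_far (hij : i + 1 < j ∨ j + 1 < i) (hr : ¬ HasRemovableOn μ j)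
    (hν : AddsBoxOn j μ ν) : aRaw β i ν = aOp β j (aRaw β i μ) := by
  by_cases hri : HasRemovableOn μ i
  · rw [aRaw_of_hasRemovableOn β hri, aOp_single, aRaw_of_addsBoxOn β hr hν,
      aRaw_of_hasRemovableOn β ((hν.hasRemovableOn_iff hij).mpr hri), Finsupp.smul_single,
      smul_eq_mul, mul_one]
  have hri' : ¬ HasRemovableOn ν i := fun h => hri ((hν.hasRemovableOn_iff hij).mp h)
  by_cases hai : ∃ ρ, AddsBoxOn i μ ρ
  · obtain ⟨ρ, hρ⟩ := hai
    obtain ⟨σ, hνσ, hρσ⟩ := hν.exists_diamond hij hρ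
    have hrj : ¬ HasRemovableOn ρ j := fun h => hr ((hρ.hasRemovableOn_iff hij.symm).mp h)
    rw [aRaw_of_addsBoxOn β hri hρ, aOp_single, one_smul, aRaw_of_addsBoxOn β hrj hρσ,
      aRaw_of_addsBoxOn β hri' hνσ]
  · have hai' : ∀ σ, ¬ AddsBoxOn i ν σ := fun σ h =>
      hai ((hν.exists_addsBoxOn_iff hij).mp ⟨σ, h⟩)
    rw [aRaw_of_not_addsBoxOn β hri (not_exists.mp hai), map_zero,
      aRaw_of_not_addsBoxOn β hri' hai']

theorem aOp_aRaw_comm (hij : i + 1 < j ∨ j + 1 < i) (μ : StrictPartition) :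
    aOp β i (aRaw β j μ) = aOp β j (aRaw β i μ) := by
  rcases aRaw_cases β j μ with ⟨cj, hcj⟩ | ⟨ν, hr, hν⟩
  · rcases aRaw_cases β i μ with ⟨ci, hci⟩ | ⟨ρ, hr, hρ⟩
    · rw [hcj, hci, aOp_single, aOp_single, hcj, hci, Finsupp.smul_single,
        Finsupp.smul_single, smul_eq_mul, smul_eq_mul, mul_comm]
    · rw [aRaw_of_addsBoxOn β hr hρ, aOp_single, one_smul,
        aRaw_of_addsBoxOn_far β hij.symm hr hρ]
  · rw [aRaw_of_addsBoxOn β hr hν, aOp_single, one_smul, aRaw_of_addsBoxOn_far β hij hr hν]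

theorem aOp_comm_far (hij : i + 1 < j ∨ j + 1 < i) :
    (aOp β i).comp (aOp β j) = (aOp β j).comp (aOp β i) :=
  Finsupp.lhom_ext fun μ c => by
    simp only [LinearMap.comp_apply, aOp_single, map_smul, aOp_aRaw_comm β hij μ]

end StrictPartition

/-- The box-adding operators on distant diagonals commute:
`A_i(x)·A_j(y) = A_j(y)·A_i(x)` whenever `|i - j| > 1`. -/
theorem AOp_comm_far {R : Type*} [CommRing R] (β x y : R) (i j : ℕ)
    (hij : i + 1 < j ∨ j + 1 < i) :
    (AOp β i x).comp (AOp β j y) = (AOp β j y).comp (AOp β i x) := by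
  have hcomm := StrictPartition.aOp_comm_far β hij
  simp only [AOp, LinearMap.add_comp, LinearMap.comp_add, LinearMap.id_comp, LinearMap.comp_id,
    LinearMap.smul_comp, LinearMap.comp_smul, hcomm]
  module

end
end

section
/- The Yang–Baxter relation A_{i+1}(x)·A_i(x⊕y)·A_{i+1}(y) = A_i(y)·A_{i+1}(x⊕y)·A_i(x) holds for all i > 0, where A_i(x) := 1 + x·a_i are the diagonal box-adding operators on strict partitions and x⊕y := x+y+βxy. -/
/-!
Write `a_n` for `aOp β n` with `n ≥ 1`. On a basis vector `μ`, `a_n` only looks at which of the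
parts `n`, `n + 1` occur in `μ`: the box on diagonal `n` is removable exactly when `n + 1` is a
part and `n` is not (then `a_n μ = β μ`), and addable exactly when `n` is a part and `n + 1` is
not (then `a_n μ` is `μ` with the part `n` replaced by `n + 1`); otherwise `a_n μ = 0`. Hence
`a_n` lands in the span of the partitions containing `n + 1` but not `n`, acts there as `β`, and
changes no other part. This gives `a_n² = β a_n` and `a_n a_{n+1} a_n = 0 = a_{n+1} a_n a_{n+1}`,
and with these relations both sides of the Yang–Baxter relation expand to
`1 + (x ⊕ y)(a_n + a_{n+1}) + y (x ⊕ y) a_n a_{n+1} + x (x ⊕ y) a_{n+1} a_n`.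
-/

noncomputable section
open Finset

theorem yang_baxter_of_relations {R A : Type*} [CommRing R] [Ring A] [Algebra R A] (β x y : R)
    {e f : A} (he : e * e = β • e) (hf : f * f = β • f) (hefe : e * f * e = 0)
    (hfef : f * e * f = 0) :
    (1 + x • f) * (1 + (x + y + β * x * y) • e) * (1 + y • f) =
      (1 + y • e) * (1 + (x + y + β * x * y) • f) * (1 + x • e) := by
  simp only [mul_add, add_mul, mul_one, one_mul, smul_mul_assoc, mul_smul_comm, smul_smul,
    he, hf, hefe, hfef, smul_zero, add_zero]
  module

namespace StrictPartition

/-- Rows are indexed from `1`, as in `SD`; beware that `row μ 0 = row μ 1`. -/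
def row (μ : StrictPartition) (i : ℕ) : ℕ := μ.1.getD (i - 1) 0

lemma row_pos_iff {μ : StrictPartition} {i : ℕ} : 0 < μ.row i ↔ i - 1 < μ.1.length := by
  refine ⟨fun h => ?_, fun h => ?_⟩
  · by_contra hl
    rw [row, List.getD_eq_default _ _ (Nat.le_of_not_lt hl)] at h
    exact h.false
  · rw [row, List.getD_eq_getElem _ _ h]
    exact μ.2.2 _ (List.getElem_mem h)

lemma mem_iff_exists_row {μ : StrictPartition} {m : ℕ} (hm : 0 < m) :
    m ∈ μ.1 ↔ ∃ i, 1 ≤ i ∧ μ.row i = m := by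
  constructor
  · intro h
    obtain ⟨k, hk, rfl⟩ := List.mem_iff_getElem.mp h
    exact ⟨k + 1, by omega, List.getD_eq_getElem _ _ hk⟩
  · rintro ⟨i, -, rfl⟩
    have hlen := row_pos_iff.mp hm
    rw [row, List.getD_eq_getElem _ _ hlen]
    exact List.getElem_mem hlen

lemma row_succ_lt {μ : StrictPartition} {i : ℕ} (hi : 1 ≤ i) (h : 0 < μ.row (i + 1)) :
    μ.row (i + 1) < μ.row i := by
  have hlen : i < μ.1.length := by simpa using row_pos_iff.mp h
  rw [row, row, List.getD_eq_getElem _ _ (by omega), List.getD_eq_getElem _ _ (by omega)]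
  simpa [show i - 1 + 1 = i by omega] using μ.2.1.getElem (i - 1) (by omega)

lemma row_add_le {μ : StrictPartition} {i : ℕ} (hi : 1 ≤ i) :
    ∀ d, 0 < μ.row (i + d) → μ.row (i + d) + d ≤ μ.row i
  | 0, _ => le_rfl
  | d + 1, h => by
    simp only [← add_assoc] at h ⊢
    have hlt := row_succ_lt (i := i + d) (by omega) h
    have hle := row_add_le hi d (Nat.zero_lt_of_lt hlt)
    omega

lemma eq_of_row_eq {μ : StrictPartition} {i j : ℕ} (hi : 1 ≤ i) (hj : 1 ≤ j)
    (hpos : 0 < μ.row i) (h : μ.row i = μ.row j) : i = j := by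
  rcases lt_trichotomy i j with hlt | rfl | hgt
  · obtain ⟨d, rfl⟩ := Nat.exists_eq_add_of_le hlt.le
    have := row_add_le hi d (h ▸ hpos); omega
  · rfl
  · obtain ⟨d, rfl⟩ := Nat.exists_eq_add_of_le hgt.le
    have := row_add_le hj d hpos; omega

lemma mem_SD {μ : StrictPartition} {p : ℕ × ℕ} :
    p ∈ SD μ ↔ 1 ≤ p.1 ∧ p.1 ≤ p.2 ∧ p.2 < p.1 + μ.row p.1 := by
  simp only [SD, shiftedDiagram, Finset.mem_filter, Finset.mem_product, Finset.mem_Icc]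
  refine ⟨fun ⟨⟨⟨h1, _⟩, _⟩, h⟩ => ⟨h1, h⟩, fun ⟨h1, h2, h3⟩ => ?_⟩
  have hlen := row_pos_iff.mp (show 0 < μ.row p.1 by omega)
  have hsum : μ.row p.1 ≤ μ.1.sum :=
    List.le_sum_of_mem (by rw [row, List.getD_eq_getElem _ _ hlen]; exact List.getElem_mem hlen)
  exact ⟨⟨⟨h1, by omega⟩, by omega, by unfold row at hsum h3; omega⟩, h2, h3⟩

lemma row_eq_of_SD_eq {μ ν : StrictPartition} (h : SD μ = SD ν) {i : ℕ} (hi : 1 ≤ i) :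
    μ.row i = ν.row i := by
  have h1 := congrArg ((i, i + μ.row i) ∈ ·) h
  have h2 := congrArg ((i, i + ν.row i) ∈ ·) h
  simp only [mem_SD, eq_iff_iff] at h1 h2
  omega

lemma ext_row {μ ν : StrictPartition} (h : ∀ i, 1 ≤ i → μ.row i = ν.row i) : μ = ν := by
  have hget : ∀ k, μ.1.getD k 0 = ν.1.getD k 0 := fun k => h (k + 1) (by omega)
  have hlen : μ.1.length = ν.1.length := by
    by_contra hne
    wlog hlt : μ.1.length < ν.1.length generalizing μ ν
    · exact this (fun i hi => (h i hi).symm) (fun k => (hget k).symm) (Ne.symm hne) (by omega)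
    have := hget μ.1.length
    rw [List.getD_eq_default _ _ le_rfl, List.getD_eq_getElem _ _ hlt] at this
    exact (ν.2.2 _ (List.getElem_mem hlt)).ne this
  refine Subtype.ext (List.ext_getElem hlen fun k h1 h2 => ?_)
  rw [← List.getD_eq_getElem _ 0 h1, ← List.getD_eq_getElem _ 0 h2]
  exact hget k

lemma SD_injective : Function.Injective SD :=
  fun _ _ h => ext_row fun _ => row_eq_of_SD_eq h

section AddBox

variable {μ ν : StrictPartition} {r n : ℕ}

lemma row_of_SD_eq_insert (hc : (r, r + n) ∉ SD μ) (h : SD ν = insert (r, r + n) (SD μ)) :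
    1 ≤ r ∧ μ.row r = n ∧ ν.row r = n + 1 ∧ ∀ i, 1 ≤ i → i ≠ r → ν.row i = μ.row i := by
  have hmem : ∀ p, p ∈ SD ν ↔ p = (r, r + n) ∨ p ∈ SD μ := fun p => by
    rw [h, Finset.mem_insert]
  have hr : 1 ≤ r := (mem_SD.mp ((hmem _).mpr (Or.inl rfl))).1
  have hrow : μ.row r = n ∧ ν.row r = n + 1 := by
    have h1 := hmem (r, r + μ.row r)
    have h2 := hmem (r, r + n)
    have h3 := hmem (r, r + n + 1)
    simp only [mem_SD, Prod.mk.injEq, true_and, true_or, iff_true] at hc h1 h2 h3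
    omega
  refine ⟨hr, hrow.1, hrow.2, fun i hi hir => ?_⟩
  have h1 := hmem (i, i + μ.row i)
  have h2 := hmem (i, i + ν.row i)
  simp only [mem_SD, Prod.mk.injEq, hir, false_and, false_or] at h1 h2
  omega

lemma succ_notMem_of_SD_eq_insert (hc : (r, r + n) ∉ SD μ)
    (h : SD ν = insert (r, r + n) (SD μ)) : n + 1 ∉ μ.1 := by
  obtain ⟨hr, hμr, hνr, hrow⟩ := row_of_SD_eq_insert hc h
  rw [mem_iff_exists_row n.succ_pos]
  rintro ⟨s, hs, hμs⟩
  have hsr : s ≠ r := by rintro rfl; omega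
  have hνs : ν.row s = n + 1 := (hrow s hs hsr).trans hμs
  exact hsr (eq_of_row_eq hs hr (by omega) (hνs.trans hνr.symm))

lemma notMem_of_SD_eq_insert (hc : (r, r + n) ∉ SD μ)
    (h : SD ν = insert (r, r + n) (SD μ)) : n ∉ ν.1 := by
  obtain ⟨hr, hμr, hνr, hrow⟩ := row_of_SD_eq_insert hc h
  intro hn
  have hn0 : 0 < n := ν.2.2 n hn
  obtain ⟨s, hs, hνs⟩ := (mem_iff_exists_row hn0).mp hn
  have hsr : s ≠ r := by rintro rfl; omega
  have hμs : μ.row s = n := (hrow s hs hsr).symm.trans hνs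
  exact hsr (eq_of_row_eq hs hr (by omega) (hμs.trans hμr.symm))

end AddBox

def swapParts (n : ℕ) (hn : 0 < n) (μ : StrictPartition) (h : ¬(n ∈ μ.1 ∧ n + 1 ∈ μ.1)) :
    StrictPartition :=
  ⟨μ.1.map (Equiv.swap n (n + 1)), by
    refine ⟨List.isChain_iff_pairwise.mpr ?_, ?_⟩
    · rw [List.pairwise_map]
      refine (List.isChain_iff_pairwise.mp μ.2.1).imp_of_mem fun {a b} ha hb hab => ?_
      have hab' : ¬(a = n + 1 ∧ b = n) := fun ⟨ha', hb'⟩ => h ⟨hb' ▸ hb, ha' ▸ ha⟩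
      simp only [Equiv.swap_apply_def, gt_iff_lt] at hab ⊢
      split_ifs <;> omega
    · simp only [List.mem_map, forall_exists_index, and_imp, forall_apply_eq_imp_iff₂]
      intro a ha
      have := μ.2.2 a ha
      simp only [Equiv.swap_apply_def]
      split_ifs <;> omega⟩

section SwapParts

variable {n : ℕ} {hn : 0 < n} {μ : StrictPartition} {h : ¬(n ∈ μ.1 ∧ n + 1 ∈ μ.1)}

lemma mem_swapParts {m : ℕ} : m ∈ (swapParts n hn μ h).1 ↔ Equiv.swap n (n + 1) m ∈ μ.1 := by
  show m ∈ μ.1.map (Equiv.swap n (n + 1)) ↔ _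
  simp only [List.mem_map, Equiv.swap_apply_eq_iff, exists_eq_right]

lemma row_swapParts (i : ℕ) : (swapParts n hn μ h).row i = Equiv.swap n (n + 1) (μ.row i) := by
  have h0 : Equiv.swap n (n + 1) 0 = 0 := Equiv.swap_apply_of_ne_of_ne (by omega) (by omega)
  have := List.getD_map (l := μ.1) (n := i - 1) (d := 0) (Equiv.swap n (n + 1))
  rwa [h0] at this

lemma row_swapParts_of_ne {r i : ℕ} (hr : 1 ≤ r) (hμr : μ.row r = n ∨ μ.row r = n + 1)
    (hi : 1 ≤ i) (hir : i ≠ r) : (swapParts n hn μ h).row i = μ.row i := by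
  have hne : μ.row i ≠ μ.row r := fun he => hir (eq_of_row_eq hi hr (by omega) he)
  have hmem : ∀ {k}, 1 ≤ k → 0 < μ.row k → μ.row k ∈ μ.1 := fun hk hpos =>
    (mem_iff_exists_row hpos).mpr ⟨_, hk, rfl⟩
  rw [row_swapParts]
  refine Equiv.swap_apply_of_ne_of_ne (fun he => ?_) (fun he => ?_) <;>
    rcases hμr with hμr | hμr <;> first
      | exact hne (hμr ▸ he)
      | exact h ⟨he ▸ hmem hi (by omega), hμr ▸ hmem hr (by omega)⟩
      | exact h ⟨hμr ▸ hmem hr (by omega), he ▸ hmem hi (by omega)⟩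

lemma SD_swapParts_of_row_eq {r : ℕ} (hr : 1 ≤ r) (hμr : μ.row r = n) :
    SD (swapParts n hn μ h) = insert (r, r + n) (SD μ) := by
  ext ⟨i, j⟩
  simp only [Finset.mem_insert, mem_SD, Prod.mk.injEq]
  by_cases hir : i = r
  · subst hir
    rw [row_swapParts, hμr, Equiv.swap_apply_left]
    omega
  · by_cases hi : 1 ≤ i
    · rw [row_swapParts_of_ne hr (.inl hμr) hi hir]
      omega
    · omega

lemma SD_swapParts_of_row_eq_succ {r : ℕ} (hr : 1 ≤ r) (hμr : μ.row r = n + 1) :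
    SD (swapParts n hn μ h) = (SD μ).erase (r, r + n) := by
  ext ⟨i, j⟩
  simp only [Finset.mem_erase, mem_SD, ne_eq, Prod.mk.injEq]
  by_cases hir : i = r
  · subst hir
    rw [row_swapParts, hμr, Equiv.swap_apply_right]
    omega
  · by_cases hi : 1 ≤ i
    · rw [row_swapParts_of_ne hr (.inr hμr) hi hir]
      omega
    · omega

end SwapParts

section Diagonal

variable {μ ν : StrictPartition} {n : ℕ}

lemma exists_removable_iff (hn : 0 < n) :
    (∃ c : ℕ × ℕ, IsRemovable μ c ∧ c.2 = c.1 + n) ↔ n + 1 ∈ μ.1 ∧ n ∉ μ.1 := by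
  constructor
  · rintro ⟨⟨r, m⟩, ⟨hc, ν, hν⟩, hd⟩
    obtain rfl : m = r + n := hd
    have hcν : (r, r + n) ∉ SD ν := by simp [hν]
    have hμ : SD μ = insert (r, r + n) (SD ν) := by rw [hν, Finset.insert_erase hc]
    obtain ⟨hr, -, hμr, -⟩ := row_of_SD_eq_insert hcν hμ
    exact ⟨(mem_iff_exists_row n.succ_pos).mpr ⟨r, hr, hμr⟩, notMem_of_SD_eq_insert hcν hμ⟩
  · rintro ⟨h1, h2⟩
    obtain ⟨r, hr, hμr⟩ := (mem_iff_exists_row n.succ_pos).mp h1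
    refine ⟨(r, r + n), ⟨?_, swapParts n hn μ (fun h => h2 h.1), ?_⟩, rfl⟩
    · simp only [mem_SD]; omega
    · exact SD_swapParts_of_row_eq_succ hr hμr

lemma exists_addable_iff (hn : 0 < n) :
    (∃ ν : StrictPartition, ∃ c : ℕ × ℕ, c.2 = c.1 + n ∧ c ∉ SD μ ∧ SD ν = insert c (SD μ)) ↔
      n ∈ μ.1 ∧ n + 1 ∉ μ.1 := by
  constructor
  · rintro ⟨ν, ⟨r, m⟩, hd, hc, hν⟩
    obtain rfl : m = r + n := hd
    obtain ⟨hr, hμr, -, -⟩ := row_of_SD_eq_insert hc hν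
    exact ⟨(mem_iff_exists_row hn).mpr ⟨r, hr, hμr⟩, succ_notMem_of_SD_eq_insert hc hν⟩
  · rintro ⟨h1, h2⟩
    obtain ⟨r, hr, hμr⟩ := (mem_iff_exists_row hn).mp h1
    refine ⟨swapParts n hn μ (fun h => h2 h.2), (r, r + n), rfl, ?_,
      SD_swapParts_of_row_eq hr hμr⟩
    simp only [mem_SD]; omega

lemma eq_swapParts_of_SD_eq_insert {c : ℕ × ℕ} (hn : 0 < n) (hd : c.2 = c.1 + n)
    (hc : c ∉ SD μ) (hν : SD ν = insert c (SD μ)) (h : ¬(n ∈ μ.1 ∧ n + 1 ∈ μ.1)) :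
    ν = swapParts n hn μ h := by
  obtain ⟨r, m⟩ := c
  obtain rfl : m = r + n := hd
  obtain ⟨hr, hμr, -, -⟩ := row_of_SD_eq_insert hc hν
  exact SD_injective (hν.trans (SD_swapParts_of_row_eq hr hμr).symm)

end Diagonal

end StrictPartition

namespace Finsupp

variable {α γ R M : Type*} [Semiring R] [AddCommMonoid M] [Module R M]

theorem eqOn_supported_of_single {f g : (α →₀ R) →ₗ[R] M} {s : Set α}
    (h : ∀ a ∈ s, f (single a 1) = g (single a 1)) : Set.EqOn f g (supported R R s) := by
  rw [supported_eq_span_single]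
  exact LinearMap.eqOn_span' (by rintro _ ⟨a, ha, rfl⟩; exact h a ha)

theorem map_supported_le_of_single {f : (α →₀ R) →ₗ[R] (γ →₀ R)} {s : Set α} {t : Set γ}
    (h : ∀ a ∈ s, f (single a 1) ∈ supported R R t) :
    (supported R R s).map f ≤ supported R R t := by
  rw [supported_eq_span_single, Submodule.map_span_le]
  rintro _ ⟨a, ha, rfl⟩
  exact h a ha

end Finsupp

open StrictPartition Finsupp

section Relations

variable {R : Type*} [CommRing R] (β : R) {n : ℕ} {μ : StrictPartition}

lemma aOp_single_one : aOp β n (single μ 1) = aRaw β n μ := by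
  rw [aOp, lift_apply, sum_single_index (by rw [zero_smul]), one_smul]

lemma aOp_single_of_succ_mem (hn : 0 < n) (h1 : n + 1 ∈ μ.1) (h2 : n ∉ μ.1) :
    aOp β n (single μ 1) = β • single μ 1 := by
  rw [aOp_single_one, smul_single_one]
  exact if_pos ((exists_removable_iff hn).mpr ⟨h1, h2⟩)

lemma aOp_single_of_mem (hn : 0 < n) (h1 : n ∈ μ.1) (h2 : n + 1 ∉ μ.1) :
    aOp β n (single μ 1) = single (swapParts n hn μ (fun h => h2 h.2)) 1 := by
  have hadd := (exists_addable_iff hn).mpr ⟨h1, h2⟩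
  rw [aOp_single_one, aRaw, if_neg fun h => h2 ((exists_removable_iff hn).mp h).1,
    dif_pos hadd]
  obtain ⟨c, hd, hc, hν⟩ := hadd.choose_spec
  rw [eq_swapParts_of_SD_eq_insert hn hd hc hν]

lemma aOp_single_of_mem_iff (hn : 0 < n) (h : n ∈ μ.1 ↔ n + 1 ∈ μ.1) :
    aOp β n (single μ 1) = 0 := by
  rw [aOp_single_one, aRaw,
    if_neg (mt (exists_removable_iff hn).mp fun ⟨h1, h2⟩ => h2 (h.mpr h1)),
    dif_neg (mt (exists_addable_iff hn).mp fun ⟨h1, h2⟩ => h2 (h.mp h1))]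

lemma aOp_single_mem_supported (hn : 0 < n) (μ : StrictPartition) :
    aOp β n (single μ 1) ∈ supported R R
      {ν | n + 1 ∈ ν.1 ∧ n ∉ ν.1 ∧ ∀ m, m ≠ n → m ≠ n + 1 → (m ∈ ν.1 ↔ m ∈ μ.1)} := by
  by_cases h1 : n ∈ μ.1 <;> by_cases h2 : n + 1 ∈ μ.1
  · rw [aOp_single_of_mem_iff β hn (iff_of_true h1 h2)]
    exact zero_mem _
  · rw [aOp_single_of_mem β hn h1 h2]
    refine single_mem_supported R 1 ⟨?_, ?_, fun m hm hm' => ?_⟩ <;>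
      simp [mem_swapParts, Equiv.swap_apply_of_ne_of_ne, *]
  · rw [aOp_single_of_succ_mem β hn h2 h1]
    exact Submodule.smul_mem _ _ (single_mem_supported R 1 ⟨h2, h1, fun _ _ _ => Iff.rfl⟩)
  · rw [aOp_single_of_mem_iff β hn (iff_of_false h1 h2)]
    exact zero_mem _

lemma range_aOp_le (hn : 0 < n) :
    LinearMap.range (aOp β n) ≤ supported R R {ν | n + 1 ∈ ν.1 ∧ n ∉ ν.1} := by
  rw [LinearMap.range_eq_map, ← supported_univ]
  refine map_supported_le_of_single fun μ _ => ?_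
  refine supported_mono (fun ν hν => ?_) (aOp_single_mem_supported β hn μ)
  exact ⟨hν.1, hν.2.1⟩

lemma aOp_eq_zero_of_mem_supported (hn : 0 < n) {x : StrictPartition →₀ R}
    (hx : x ∈ supported R R {ν : StrictPartition | n ∈ ν.1 ↔ n + 1 ∈ ν.1}) : aOp β n x = 0 := by
  refine eqOn_supported_of_single (g := 0) (fun μ hμ => ?_) hx
  exact aOp_single_of_mem_iff β hn hμ

lemma aOp_eq_smul_of_mem_supported (hn : 0 < n) {x : StrictPartition →₀ R}
    (hx : x ∈ supported R R {ν : StrictPartition | n + 1 ∈ ν.1 ∧ n ∉ ν.1}) :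
    aOp β n x = β • x := by
  refine eqOn_supported_of_single (g := β • LinearMap.id) (fun μ hμ => ?_) hx
  exact aOp_single_of_succ_mem β hn hμ.1 hμ.2

lemma aOp_mul_self (hn : 0 < n) : aOp β n * aOp β n = β • aOp β n :=
  LinearMap.ext fun x => aOp_eq_smul_of_mem_supported β hn (range_aOp_le β hn ⟨x, rfl⟩)

lemma aOp_mul_aOp_succ_mul_aOp (hn : 0 < n) : aOp β n * aOp β (n + 1) * aOp β n = 0 := by
  refine LinearMap.ext fun x => ?_
  have hx : aOp β n x ∈ supported R R {ν | n + 1 ∈ ν.1 ∧ n ∉ ν.1} :=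
    range_aOp_le β hn ⟨x, rfl⟩
  have hmap : (supported R R {ν | n + 1 ∈ ν.1 ∧ n ∉ ν.1}).map (aOp β (n + 1)) ≤
      supported R R {ν | n ∈ ν.1 ↔ n + 1 ∈ ν.1} :=
    map_supported_le_of_single fun μ hμ => by
      refine supported_mono (fun ν hν => ?_) (aOp_single_mem_supported β (by omega) μ)
      exact iff_of_false (fun h => hμ.2 ((hν.2.2 n (by omega) (by omega)).mp h)) hν.2.1
  exact aOp_eq_zero_of_mem_supported β hn (hmap (Submodule.mem_map_of_mem hx))

lemma aOp_succ_mul_aOp_mul_aOp_succ (hn : 0 < n) :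
    aOp β (n + 1) * aOp β n * aOp β (n + 1) = 0 := by
  refine LinearMap.ext fun x => ?_
  have hx : aOp β (n + 1) x ∈ supported R R {ν | n + 1 + 1 ∈ ν.1 ∧ n + 1 ∉ ν.1} :=
    range_aOp_le β (by omega) ⟨x, rfl⟩
  have hmap : (supported R R {ν | n + 1 + 1 ∈ ν.1 ∧ n + 1 ∉ ν.1}).map (aOp β n) ≤
      supported R R {ν | n + 1 ∈ ν.1 ↔ n + 1 + 1 ∈ ν.1} :=
    map_supported_le_of_single fun μ hμ => by
      refine supported_mono (fun ν hν => ?_) (aOp_single_mem_supported β hn μ)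
      exact iff_of_true hν.1 ((hν.2.2 (n + 1 + 1) (by omega) (by omega)).mpr hμ.1)
  exact aOp_eq_zero_of_mem_supported β (by omega) (hmap (Submodule.mem_map_of_mem hx))

end Relations

lemma AOp_eq_one_add {R : Type*} [CommRing R] (β : R) (i : ℕ) (x : R) :
    AOp β i x = 1 + x • aOp β i :=
  rfl

/-- The Yang–Baxter relation
`A_{i+1}(x)·A_i(x⊕y)·A_{i+1}(y) = A_i(y)·A_{i+1}(x⊕y)·A_i(x)` for all `i > 0`,
where `x ⊕ y := x + y + β·x·y`. -/
theorem AOp_yang_baxter {R : Type*} [CommRing R] (β x y : R) (i : ℕ) (hi : 0 < i) :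
    (AOp β (i + 1) x).comp ((AOp β i (x + y + β * x * y)).comp (AOp β (i + 1) y)) =
      (AOp β i y).comp ((AOp β (i + 1) (x + y + β * x * y)).comp (AOp β i x)) := by
  simp only [AOp_eq_one_add, ← Module.End.mul_eq_comp, ← mul_assoc]
  exact yang_baxter_of_relations β x y (e := aOp β i) (f := aOp β (i + 1)) (aOp_mul_self β hi)
    (aOp_mul_self β i.succ_pos) (aOp_mul_aOp_succ_mul_aOp β hi)
    (aOp_succ_mul_aOp_mul_aOp_succ β hi)

end
end

section
/- The boundary Yang–Baxter relation A₀(x)·A₁(x⊕y)·A₀(y)·A₁(y⊖x) = A₁(y⊖x)·A₀(y)·A₁(x⊕y)·A₀(x) holds, where A_i(x) := 1 + x·a_i are the diagonal box-adding operators on strict partitions, x⊕y := x+y+βxy, and y⊖x := (y-x)/(1+βx). -/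
noncomputable section
open Finset

section AuxCombinatorics

lemma getD_le_sum (l : List ℕ) (n : ℕ) : l.getD n 0 ≤ l.sum := by
  induction l generalizing n with
  | nil => simp
  | cons a t ih =>
    cases n with
    | zero => simp
    | succ m =>
      rw [List.getD_cons_succ, List.sum_cons]
      exact le_trans (ih m) (Nat.le_add_left _ _)

lemma getD_pos_lt_length {l : List ℕ} {n : ℕ} (h : l.getD n 0 ≠ 0) : n < l.length := by
  by_contra hn
  exact h (List.getD_eq_default _ _ (by omega))

lemma mem_SD_iff (μ : StrictPartition) (i j : ℕ) :
    (i, j) ∈ SD μ ↔ 1 ≤ i ∧ i ≤ j ∧ j < i + μ.1.getD (i - 1) 0 := by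
  simp only [SD, shiftedDiagram, Finset.mem_filter, Finset.mem_product, Finset.mem_Icc]
  constructor
  · rintro ⟨⟨⟨h1, h2⟩, h3, h4⟩, h5, h6⟩
    exact ⟨h1, h5, h6⟩
  · rintro ⟨h1, h2, h3⟩
    have hg : μ.1.getD (i - 1) 0 ≠ 0 := by omega
    have hl := getD_pos_lt_length hg
    have hs := getD_le_sum μ.1 (i - 1)
    exact ⟨⟨⟨h1, by omega⟩, by omega, by omega⟩, h2, h3⟩

lemma sp_getD_pos (μ : StrictPartition) {n : ℕ} (h : n < μ.1.length) :
    0 < μ.1.getD n 0 := by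
  rw [List.getD_eq_getElem _ _ h]
  exact μ.2.2 _ (List.getElem_mem _)

lemma sp_anti (μ : StrictPartition) {i j : ℕ} (h1 : 1 ≤ i) (hij : i < j)
    (hj : μ.1.getD (j - 1) 0 ≠ 0) : μ.1.getD (j - 1) 0 < μ.1.getD (i - 1) 0 := by
  have hjl : j - 1 < μ.1.length := getD_pos_lt_length hj
  have hil : i - 1 < μ.1.length := by omega
  have hp : μ.1.Pairwise (· > ·) := List.isChain_iff_pairwise.mp μ.2.1
  have hg := List.pairwise_iff_getElem.mp hp (i - 1) (j - 1) hil hjl (by omega)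
  rw [List.getD_eq_getElem _ _ hjl, List.getD_eq_getElem _ _ hil]
  exact hg

lemma interval_eq {j a b : ℕ}
    (h : ∀ m, (j ≤ m ∧ m < j + a) ↔ (j ≤ m ∧ m < j + b)) : a = b := by
  rcases Nat.lt_trichotomy a b with hab | hab | hab
  · have := (h (j + a)).mpr ⟨by omega, by omega⟩; omega
  · exact hab
  · have := (h (j + b)).mp ⟨by omega, by omega⟩; omega

lemma rem1_char {μ : StrictPartition} {i : ℕ} (h : IsRemovable μ (i, i + 1)) :
    1 ≤ i ∧ μ.1.getD (i - 1) 0 = 2 ∧ μ.1.getD i 0 = 0 := by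
  obtain ⟨hmem, ν, hν⟩ := h
  rw [mem_SD_iff] at hmem
  obtain ⟨hi1, -, hi3⟩ := hmem
  have H : ∀ a b : ℕ, (a, b) ∈ SD ν ↔ (a, b) ∈ SD μ ∧ (a, b) ≠ (i, i + 1) := by
    intro a b; rw [hν, Finset.mem_erase]; tauto
  have hνii : (i, i) ∈ SD ν := by
    rw [H]
    refine ⟨(mem_SD_iff μ i i).mpr ⟨hi1, le_refl _, by omega⟩, ?_⟩
    intro hEq; rw [Prod.mk.injEq] at hEq; omega
  rw [mem_SD_iff] at hνii
  have hνle : ν.1.getD (i - 1) 0 ≤ 1 := by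
    by_contra hc
    have h2 : (i, i + 1) ∈ SD ν := (mem_SD_iff ν i (i + 1)).mpr ⟨hi1, by omega, by omega⟩
    rw [H] at h2
    exact h2.2 rfl
  have hν1 : ν.1.getD (i - 1) 0 = 1 := by omega
  have hμ2 : μ.1.getD (i - 1) 0 = 2 := by
    by_contra hc
    have h2 : (i, i + 2) ∈ SD ν := by
      rw [H]
      refine ⟨(mem_SD_iff μ i (i + 2)).mpr ⟨hi1, by omega, by omega⟩, ?_⟩
      intro hEq; rw [Prod.mk.injEq] at hEq; omega
    rw [mem_SD_iff] at h2
    omega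
  refine ⟨hi1, hμ2, ?_⟩
  by_contra hc
  have h2 : (i + 1, i + 1) ∈ SD ν := by
    rw [H]
    constructor
    · refine (mem_SD_iff μ (i + 1) (i + 1)).mpr ⟨by omega, le_refl _, ?_⟩
      simp only [Nat.add_sub_cancel]
      omega
    · intro hEq; rw [Prod.mk.injEq] at hEq; omega
  rw [mem_SD_iff] at h2
  simp only [Nat.add_sub_cancel] at h2
  have ha := sp_anti ν (i := i) (j := i + 1) hi1 (by omega)
    (by simp only [Nat.add_sub_cancel]; omega)
  simp only [Nat.add_sub_cancel] at ha
  omega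

lemma rem0_char {μ : StrictPartition} {i : ℕ} (h : IsRemovable μ (i, i)) :
    1 ≤ i ∧ μ.1.getD (i - 1) 0 = 1 := by
  obtain ⟨hmem, ν, hν⟩ := h
  rw [mem_SD_iff] at hmem
  obtain ⟨hi1, -, hi3⟩ := hmem
  have H : ∀ a b : ℕ, (a, b) ∈ SD ν ↔ (a, b) ∈ SD μ ∧ (a, b) ≠ (i, i) := by
    intro a b; rw [hν, Finset.mem_erase]; tauto
  have hν0 : (i, i) ∉ SD ν := by rw [H]; intro hcc; exact hcc.2 rfl
  have hνg : ν.1.getD (i - 1) 0 = 0 := by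
    by_contra hc
    exact hν0 ((mem_SD_iff ν i i).mpr ⟨hi1, le_refl _, by omega⟩)
  refine ⟨hi1, ?_⟩
  by_contra hc
  have h2 : (i, i + 1) ∈ SD ν := by
    rw [H]
    refine ⟨(mem_SD_iff μ i (i + 1)).mpr ⟨hi1, by omega, by omega⟩, ?_⟩
    intro hEq; rw [Prod.mk.injEq] at hEq; omega
  rw [mem_SD_iff] at h2
  omega

lemma add0_char {μ ρ : StrictPartition} {i : ℕ} (hnot : (i, i) ∉ SD μ)
    (hSD : SD ρ = insert (i, i) (SD μ)) :
    1 ≤ i ∧ μ.1.getD (i - 1) 0 = 0 ∧ ρ.1.getD (i - 1) 0 = 1 ∧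
      ∀ m, 1 ≤ m → m ≠ i → ρ.1.getD (m - 1) 0 = μ.1.getD (m - 1) 0 := by
  have H : ∀ a b : ℕ, (a, b) ∈ SD ρ ↔ (a, b) = (i, i) ∨ (a, b) ∈ SD μ := by
    intro a b; rw [hSD, Finset.mem_insert]
  have hii : (i, i) ∈ SD ρ := by rw [H]; left; rfl
  rw [mem_SD_iff] at hii
  obtain ⟨hi1, -, hi3⟩ := hii
  have hμ0 : μ.1.getD (i - 1) 0 = 0 := by
    by_contra hc
    exact hnot ((mem_SD_iff μ i i).mpr ⟨hi1, le_refl _, by omega⟩)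
  have h1 : (i, i + 1) ∉ SD ρ := by
    rw [H]
    rintro (h | h)
    · rw [Prod.mk.injEq] at h; omega
    · rw [mem_SD_iff] at h; omega
  have hρ1 : ρ.1.getD (i - 1) 0 = 1 := by
    by_contra hc
    exact h1 ((mem_SD_iff ρ i (i + 1)).mpr ⟨hi1, by omega, by omega⟩)
  refine ⟨hi1, hμ0, hρ1, ?_⟩
  intro m hm1 hmi
  apply interval_eq (j := m)
  intro jj
  have hh := H m jj
  rw [mem_SD_iff, mem_SD_iff, Prod.mk.injEq] at hh
  omega

lemma add1_char {ρ ν : StrictPartition} {m : ℕ} (hnot : (m, m + 1) ∉ SD ρ)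
    (hSD : SD ν = insert (m, m + 1) (SD ρ)) :
    1 ≤ m ∧ ρ.1.getD (m - 1) 0 = 1 ∧ ν.1.getD (m - 1) 0 = 2 ∧
      ∀ r, 1 ≤ r → r ≠ m → ν.1.getD (r - 1) 0 = ρ.1.getD (r - 1) 0 := by
  have H : ∀ a b : ℕ, (a, b) ∈ SD ν ↔ (a, b) = (m, m + 1) ∨ (a, b) ∈ SD ρ := by
    intro a b; rw [hSD, Finset.mem_insert]
  have hm : (m, m + 1) ∈ SD ν := by rw [H]; left; rfl
  rw [mem_SD_iff] at hm
  obtain ⟨hm1, -, hm3⟩ := hm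
  have hρle : ρ.1.getD (m - 1) 0 ≤ 1 := by
    by_contra hc
    exact hnot ((mem_SD_iff ρ m (m + 1)).mpr ⟨hm1, by omega, by omega⟩)
  have hρ1 : ρ.1.getD (m - 1) 0 = 1 := by
    have hmm : (m, m) ∈ SD ν := (mem_SD_iff ν m m).mpr ⟨hm1, le_refl _, by omega⟩
    rw [H] at hmm
    rcases hmm with h | h
    · rw [Prod.mk.injEq] at h; omega
    · rw [mem_SD_iff] at h; omega
  have hν2 : ν.1.getD (m - 1) 0 = 2 := by
    by_contra hc
    have h2 : (m, m + 2) ∈ SD ν := (mem_SD_iff ν m (m + 2)).mpr ⟨hm1, by omega, by omega⟩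
    rw [H] at h2
    rcases h2 with h | h
    · rw [Prod.mk.injEq] at h; omega
    · rw [mem_SD_iff] at h; omega
  refine ⟨hm1, hρ1, hν2, ?_⟩
  intro r hr1 hrm
  apply interval_eq (j := r)
  intro jj
  have hh := H r jj
  rw [mem_SD_iff, mem_SD_iff, Prod.mk.injEq] at hh
  omega

lemma no_both_rem (μ : StrictPartition) (i j : ℕ)
    (h0 : IsRemovable μ (i, i)) (h1 : IsRemovable μ (j, j + 1)) : False := by
  obtain ⟨hi1, hμi⟩ := rem0_char h0
  obtain ⟨hj1, hμj, hμj1⟩ := rem1_char h1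
  have hi : i - 1 < μ.1.length := getD_pos_lt_length (by omega)
  have hjlen : μ.1.length ≤ j := by
    by_contra hc
    have := sp_getD_pos μ (n := j) (by omega)
    omega
  rcases Nat.lt_or_ge i j with hij | hij
  · have := sp_anti μ hi1 hij (by omega)
    omega
  · have hij' : i = j := by omega
    subst hij'
    omega

lemma rem1_add0_no1 {μ ρ : StrictPartition} {j i : ℕ}
    (h1 : IsRemovable μ (j, j + 1))
    (hnot : (i, i) ∉ SD μ) (hSD : SD ρ = insert (i, i) (SD μ)) :
    (¬ ∃ c : ℕ × ℕ, IsRemovable ρ c ∧ c.2 = c.1 + 1) ∧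
    (¬ ∃ ν : StrictPartition, ∃ c : ℕ × ℕ, c.2 = c.1 + 1 ∧ c ∉ SD ρ ∧
        SD ν = insert c (SD ρ)) := by
  obtain ⟨hj1, hμj, hμj1⟩ := rem1_char h1
  obtain ⟨hi1, hμi0, hρi, hρeq⟩ := add0_char hnot hSD
  have hjle : j - 1 < μ.1.length := getD_pos_lt_length (by omega)
  have hjlen : μ.1.length ≤ j := by
    by_contra hc
    have := sp_getD_pos μ (n := j) (by omega)
    omega
  have hilen : μ.1.length ≤ i - 1 := by
    by_contra hc
    have := sp_getD_pos μ (n := i - 1) (by omega)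
    omega
  constructor
  · rintro ⟨c, hrem, hc⟩
    obtain ⟨c1, c2⟩ := c
    dsimp at hc
    subst hc
    obtain ⟨hm1, hρm, hρm1⟩ := rem1_char hrem
    have hmi : c1 ≠ i := by rintro rfl; omega
    have hμm : μ.1.getD (c1 - 1) 0 = 2 := by rw [← hρeq c1 hm1 hmi]; exact hρm
    have hmle : c1 - 1 < μ.1.length := getD_pos_lt_length (by omega)
    have hmj : c1 = j := by
      rcases Nat.lt_trichotomy c1 j with h | h | h
      · have := sp_anti μ hm1 h (by omega); omega
      · exact h
      · omega
    have hilρ : i - 1 < ρ.1.length := getD_pos_lt_length (by omega)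
    rcases Nat.lt_or_ge c1 (i - 1) with h | h
    · have := sp_getD_pos ρ (n := c1) (by omega); omega
    · have hceq : c1 = i - 1 := by omega
      rw [hceq] at hρm1
      omega
  · rintro ⟨ν, c, hc, hcnot, hν⟩
    obtain ⟨c1, c2⟩ := c
    dsimp at hc
    subst hc
    obtain ⟨hm1, hρm, hνm, hνeq⟩ := add1_char hcnot hν
    have hc1i : c1 = i := by
      by_contra hne
      have hμc : μ.1.getD (c1 - 1) 0 = 1 := by rw [← hρeq c1 hm1 hne]; exact hρm
      have hc1l : c1 - 1 < μ.1.length := getD_pos_lt_length (by omega)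
      rcases Nat.lt_trichotomy c1 j with h | h | h
      · have := sp_anti μ hm1 h (by omega); omega
      · subst h; omega
      · omega
    subst hc1i
    have hji : j < c1 := by omega
    have hνj : ν.1.getD (j - 1) 0 = 2 := by
      rw [hνeq j hj1 (by omega), hρeq j hj1 (by omega)]; exact hμj
    have := sp_anti ν hj1 hji (by omega)
    omega

end AuxCombinatorics
section AuxOperators

variable {R : Type*} [CommRing R] (β : R)

lemma aOp_single (n : ℕ) (μ : StrictPartition) (r : R) :
    aOp β n (Finsupp.single μ r) = r • aRaw β n μ := by
  simp [aOp, Finsupp.lift_apply, Finsupp.sum_single_index]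

lemma aOp_aRaw (n : ℕ) (μ : StrictPartition) :
    aOp β n (aRaw β n μ) = β • aRaw β n μ := by
  by_cases hrem : ∃ c : ℕ × ℕ, IsRemovable μ c ∧ c.2 = c.1 + n
  · have hA : aRaw β n μ = Finsupp.single μ β := by unfold aRaw; rw [if_pos hrem]
    rw [hA, aOp_single, hA]
  · by_cases hadd : ∃ ν : StrictPartition, ∃ c : ℕ × ℕ, c.2 = c.1 + n ∧ c ∉ SD μ ∧
        SD ν = insert c (SD μ)
    · have hA : aRaw β n μ = Finsupp.single hadd.choose 1 := by
        unfold aRaw; rw [if_neg hrem, dif_pos hadd]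
      obtain ⟨c, hc, hcnot, hSDν⟩ := hadd.choose_spec
      have hrem' : ∃ c' : ℕ × ℕ, IsRemovable hadd.choose c' ∧ c'.2 = c'.1 + n :=
        ⟨c, ⟨by rw [hSDν]; exact Finset.mem_insert_self _ _,
          ⟨μ, by rw [hSDν, Finset.erase_insert hcnot]⟩⟩, hc⟩
      have hA' : aRaw β n hadd.choose = Finsupp.single hadd.choose β := by
        unfold aRaw; rw [if_pos hrem']
      rw [hA, aOp_single, one_smul, hA', Finsupp.smul_single, smul_eq_mul, mul_one]
    · have hA : aRaw β n μ = 0 := by unfold aRaw; rw [if_neg hrem, dif_neg hadd]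
      rw [hA, map_zero, smul_zero]

lemma key1 (μ : StrictPartition)
    (hrem1 : ∃ c : ℕ × ℕ, IsRemovable μ c ∧ c.2 = c.1 + 1) :
    aOp β 1 (aRaw β 0 μ) = 0 := by
  obtain ⟨c, hremc, hc⟩ := hrem1
  obtain ⟨c1, c2⟩ := c
  dsimp at hc
  subst hc
  by_cases hrem0 : ∃ c : ℕ × ℕ, IsRemovable μ c ∧ c.2 = c.1 + 0
  · exfalso
    obtain ⟨d, hremd, hd⟩ := hrem0
    obtain ⟨d1, d2⟩ := d
    dsimp at hd
    have hdd : d2 = d1 := by omega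
    subst hdd
    exact no_both_rem μ d2 c1 hremd hremc
  · by_cases hadd : ∃ ν : StrictPartition, ∃ c : ℕ × ℕ, c.2 = c.1 + 0 ∧ c ∉ SD μ ∧
        SD ν = insert c (SD μ)
    · have hA : aRaw β 0 μ = Finsupp.single hadd.choose 1 := by
        unfold aRaw; rw [if_neg hrem0, dif_pos hadd]
      obtain ⟨d, hd, hdnot, hSDρ⟩ := hadd.choose_spec
      obtain ⟨d1, d2⟩ := d
      dsimp at hd hdnot hSDρ
      have hdd : d2 = d1 := by omega
      subst hdd
      obtain ⟨hno1, hno2⟩ := rem1_add0_no1 hremc hdnot hSDρ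
      rw [hA, aOp_single, one_smul]
      unfold aRaw
      rw [if_neg hno1, dif_neg hno2]
    · have hA : aRaw β 0 μ = 0 := by unfold aRaw; rw [if_neg hrem0, dif_neg hadd]
      rw [hA, map_zero]

lemma bab_zero (μ : StrictPartition) :
    aOp β 1 (aOp β 0 (aRaw β 1 μ)) = 0 := by
  by_cases hrem : ∃ c : ℕ × ℕ, IsRemovable μ c ∧ c.2 = c.1 + 1
  · have hA : aRaw β 1 μ = Finsupp.single μ β := by unfold aRaw; rw [if_pos hrem]
    rw [hA, aOp_single, map_smul, key1 β μ hrem, smul_zero]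
  · by_cases hadd : ∃ ν : StrictPartition, ∃ c : ℕ × ℕ, c.2 = c.1 + 1 ∧ c ∉ SD μ ∧
        SD ν = insert c (SD μ)
    · have hA : aRaw β 1 μ = Finsupp.single hadd.choose 1 := by
        unfold aRaw; rw [if_neg hrem, dif_pos hadd]
      obtain ⟨c, hc, hcnot, hSDν⟩ := hadd.choose_spec
      have hrem' : ∃ c' : ℕ × ℕ, IsRemovable hadd.choose c' ∧ c'.2 = c'.1 + 1 :=
        ⟨c, ⟨by rw [hSDν]; exact Finset.mem_insert_self _ _,
          ⟨μ, by rw [hSDν, Finset.erase_insert hcnot]⟩⟩, hc⟩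
      rw [hA, aOp_single, one_smul, key1 β _ hrem']
    · have hA : aRaw β 1 μ = 0 := by unfold aRaw; rw [if_neg hrem, dif_neg hadd]
      rw [hA, map_zero, map_zero]

end AuxOperators

/-- The boundary Yang–Baxter relation
`A₀(x)·A₁(x⊕y)·A₀(y)·A₁(y⊖x) = A₁(y⊖x)·A₀(y)·A₁(x⊕y)·A₀(x)`,
where `x ⊕ y := x + y + β·x·y` and `y ⊖ x := (y - x)·(1+βx)⁻¹` (here `u` is the
inverse of `1 + βx`, so `y ⊖ x = (y - x)·u`). -/
theorem AOp_boundary_yang_baxter {R : Type*} [CommRing R] (β x y u : R)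
    (hu : u * (1 + β * x) = 1) :
    (AOp β 0 x).comp ((AOp β 1 (x + y + β * x * y)).comp
        ((AOp β 0 y).comp (AOp β 1 ((y - x) * u)))) =
      (AOp β 1 ((y - x) * u)).comp ((AOp β 0 y).comp
        ((AOp β 1 (x + y + β * x * y)).comp (AOp β 0 x))) := by
  set a : Module.End R (StrictPartition →₀ R) := aOp β 0 with ha
  set b : Module.End R (StrictPartition →₀ R) := aOp β 1 with hb
  have ha2 : a * a = β • a := by
    apply Finsupp.lhom_ext
    intro μ r
    rw [Module.End.mul_apply, LinearMap.smul_apply, ha, aOp_single, map_smul,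
      aOp_aRaw, smul_comm]
  have hb2 : b * b = β • b := by
    apply Finsupp.lhom_ext
    intro μ r
    rw [Module.End.mul_apply, LinearMap.smul_apply, hb, aOp_single, map_smul,
      aOp_aRaw, smul_comm]
  have hbab : b * (a * b) = 0 := by
    apply Finsupp.lhom_ext
    intro μ r
    rw [Module.End.mul_apply, Module.End.mul_apply, LinearMap.zero_apply, ha, hb,
      aOp_single, map_smul, map_smul, bab_zero, smul_zero]
  have haab : a * (a * b) = β • (a * b) := by rw [← mul_assoc, ha2, smul_mul_assoc]
  have habb : a * (b * b) = β • (a * b) := by rw [hb2, mul_smul_comm]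
  have hbba : b * (b * a) = β • (b * a) := by rw [← mul_assoc, hb2, smul_mul_assoc]
  have hbaa : b * (a * a) = β • (b * a) := by rw [ha2, mul_smul_comm]
  have habab : a * (b * (a * b)) = 0 := by rw [hbab, mul_zero]
  have hbaba : b * (a * (b * a)) = 0 := by
    rw [show a * (b * a) = (a * b) * a from (mul_assoc a b a).symm, ← mul_assoc,
      hbab, zero_mul]
  have hcomp : ∀ (f g : Module.End R (StrictPartition →₀ R)), f.comp g = f * g :=
    fun _ _ => rfl
  have hAOp : ∀ (i : ℕ) (t : R),
      AOp β i t = (1 : Module.End R (StrictPartition →₀ R)) + t • aOp β i :=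
    fun _ _ => rfl
  simp only [hcomp, hAOp]
  rw [← ha, ← hb]
  simp only [mul_add, add_mul, mul_one, one_mul, mul_assoc, smul_mul_assoc,
    mul_smul_comm, ha2, hb2, hbab, haab, habb, hbba, hbaa, habab, hbaba,
    smul_zero, mul_zero, zero_mul, add_zero, zero_add, smul_smul]
  match_scalars
  all_goals try ring
  · linear_combination ((y - x) * (x + y + β * x * y)) * hu
  · linear_combination (-(y - x) * (x + y + β * x * y)) * hu

end
end
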